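/- arXiv:2207.08964 — 4 statements merged into one kernel-verified Lean document; each statement's English description precedes it below -/
import Mathlib

section
/- (Double robustness of Δ_mr in model M1.) Let f* be any measurable function of (A,Z,X) with values bounded away from 0 (a possibly misspecified model for the conditional density f(A,Z|X)), and let Q and γ be the true conditional expectations with δ=Q/γ. Then E[ Z·A·(A+Z)/(2·γ(A,Z,X)·f*(A,Z|X)) · ( Y·w_{α_Z}(A,Z,X,Y) − Q(A,Z,X) − δ(A,Z,X)·( w_{α_Z}(A,Z,X,Y) − γ(A,Z,X) ) ) + Δ(X) ] = E[Δ(X)]. -/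
open MeasureTheory ProbabilityTheory

noncomputable section

/-- Double robustness of `Δ_mr` in model `M1`: with the true `Q` and `γ`
(and `δ = Q/γ`, `Δ(X) = δ(1,1,X) - δ(-1,-1,X)`), and `f*` an arbitrary measurable candidate
for `f(A,Z|X)` bounded away from `0`,
`E[ Z·A·(A+Z)/(2·γ·f*) · (Y·w - Q - δ·(w - γ)) + Δ(X) ] = E[Δ(X)]`. -/
theorem statement_6
    {Ω : Type*} [MeasurableSpace Ω] (μ : Measure Ω) [IsProbabilityMeasure μ]
    {𝓧 : Type*} [MeasurableSpace 𝓧]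
    (X : Ω → 𝓧) (Z A Y : Ω → ℝ)
    (w : ℝ → ℝ → 𝓧 → ℝ → ℝ)
    (γf Qf fAZ fstar : ℝ → ℝ → 𝓧 → ℝ)
    -- measurability
    (hX : Measurable X) (hZ : Measurable Z) (hA : Measurable A) (hY : Measurable Y)
    (hwm : Measurable fun p : ℝ × ℝ × 𝓧 × ℝ => w p.1 p.2.1 p.2.2.1 p.2.2.2)
    (hγm : Measurable fun p : ℝ × ℝ × 𝓧 => γf p.1 p.2.1 p.2.2)
    (hQm : Measurable fun p : ℝ × ℝ × 𝓧 => Qf p.1 p.2.1 p.2.2)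
    (hfstarm : Measurable fun p : ℝ × ℝ × 𝓧 => fstar p.1 p.2.1 p.2.2)
    -- ranges
    (hZr : ∀ ω, Z ω = -1 ∨ Z ω = 1)
    (hAr : ∀ ω, A ω = -1 ∨ A ω = 0 ∨ A ω = 1)
    (hYint : Integrable Y μ)
    -- w is bounded and vanishes unless A = Z
    (Mw : ℝ) (hwb : ∀ a z x y, |w a z x y| ≤ Mw)
    (hwzero : ∀ a z x y, a ≠ z → w a z x y = 0)
    -- the true f(A,Z|X) is bounded away from 0
    (hfAZ : ∀ a z : ℝ,
      (fun ω => fAZ a z (X ω)) =ᵐ[μ]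
        μ[Set.indicator {ω | A ω = a ∧ Z ω = z} (fun _ => (1 : ℝ)) |
          MeasurableSpace.comap X inferInstance])
    (εf : ℝ) (hεf : 0 < εf) (hfpos : ∀ a z x, (a = -1 ∨ a = 0 ∨ a = 1) → (z = -1 ∨ z = 1) → εf ≤ fAZ a z x)
    -- f* is a (possibly misspecified) candidate, bounded away from 0
    (εs : ℝ) (hεs : 0 < εs) (hfstarpos : ∀ a z x, εs ≤ fstar a z x)
    -- γ is the true E[w | A, Z, X], bounded away from 0 on {A = Z}
    (hγ : (fun ω => γf (A ω) (Z ω) (X ω)) =ᵐ[μ]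
      μ[(fun ω => w (A ω) (Z ω) (X ω) (Y ω)) |
        MeasurableSpace.comap (fun ω => (A ω, Z ω, X ω)) inferInstance])
    (εγ : ℝ) (hεγ : 0 < εγ) (hγpos : ∀ z x, (z = -1 ∨ z = 1) → εγ ≤ γf z z x)
    -- Q is the true E[Y·w | A, Z, X]
    (hQ : (fun ω => Qf (A ω) (Z ω) (X ω)) =ᵐ[μ]
      μ[(fun ω => Y ω * w (A ω) (Z ω) (X ω) (Y ω)) |
        MeasurableSpace.comap (fun ω => (A ω, Z ω, X ω)) inferInstance]) :
    ∫ ω, (Z ω * A ω * (A ω + Z ω)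
          / (2 * γf (A ω) (Z ω) (X ω) * fstar (A ω) (Z ω) (X ω))
        * (Y ω * w (A ω) (Z ω) (X ω) (Y ω) - Qf (A ω) (Z ω) (X ω)
            - (Qf (A ω) (Z ω) (X ω) / γf (A ω) (Z ω) (X ω))
              * (w (A ω) (Z ω) (X ω) (Y ω) - γf (A ω) (Z ω) (X ω)))
        + (Qf 1 1 (X ω) / γf 1 1 (X ω) - Qf (-1) (-1) (X ω) / γf (-1) (-1) (X ω))) ∂μ
      = ∫ ω, (Qf 1 1 (X ω) / γf 1 1 (X ω) - Qf (-1) (-1) (X ω) / γf (-1) (-1) (X ω)) ∂μ := by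
  classical
  have hgmeas : Measurable (fun ω => (A ω, Z ω, X ω)) := hA.prodMk (hZ.prodMk hX)
  have hm : MeasurableSpace.comap (fun ω => (A ω, Z ω, X ω))
      (inferInstance : MeasurableSpace (ℝ × ℝ × 𝓧)) ≤ ‹MeasurableSpace Ω› :=
    hgmeas.comap_le
  set cf : ℝ → ℝ → 𝓧 → ℝ := fun a z x =>
    z * a * (a + z) / (2 * γf a z x * fstar a z x) with hcf_def
  set c : Ω → ℝ := fun ω => cf (A ω) (Z ω) (X ω) with hc_def
  set c2 : Ω → ℝ := fun ω =>
    -(cf (A ω) (Z ω) (X ω)) * (Qf (A ω) (Z ω) (X ω) / γf (A ω) (Z ω) (X ω)) with hc2_def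
  have hΩne : Nonempty Ω := by
    by_contra h
    rw [not_nonempty_iff] at h
    have h1 : μ Set.univ = 1 := measure_univ
    rw [Set.univ_eq_empty_iff.mpr h, measure_empty] at h1
    exact zero_ne_one h1
  obtain ⟨ω₀⟩ := hΩne
  have hMw0 : 0 ≤ Mw := le_trans (abs_nonneg _) (hwb 0 0 (X ω₀) 0)
  -- if c ω ≠ 0 then γ' ω ≥ εγ
  have hc_ne : ∀ ω, c ω ≠ 0 → εγ ≤ γf (A ω) (Z ω) (X ω) := by
    intro ω hc
    have hnum : Z ω * A ω * (A ω + Z ω) ≠ 0 := by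
      intro h
      apply hc
      show cf (A ω) (Z ω) (X ω) = 0
      rw [hcf_def]
      simp only [h, zero_div]
    have hAZ : A ω = Z ω := by
      rcases hAr ω with ha | ha | ha <;> rcases hZr ω with hz | hz <;>
        rw [ha, hz] at hnum ⊢ <;> norm_num at hnum
    have : εγ ≤ γf (Z ω) (Z ω) (X ω) := hγpos (Z ω) (X ω) (hZr ω)
    rwa [hAZ]
  set B : ℝ := (εγ * εs)⁻¹ with hB_def
  have hB0 : 0 < B := by positivity
  have hc_bd : ∀ ω, |c ω| ≤ B := by
    intro ω
    by_cases hc : c ω = 0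
    · rw [hc, abs_zero]; exact hB0.le
    · have hγε : εγ ≤ γf (A ω) (Z ω) (X ω) := hc_ne ω hc
      have hfε : εs ≤ fstar (A ω) (Z ω) (X ω) := hfstarpos _ _ _
      have hnum : |Z ω * A ω * (A ω + Z ω)| ≤ 2 := by
        rcases hAr ω with ha | ha | ha <;> rcases hZr ω with hz | hz <;>
          rw [ha, hz] <;> norm_num
      have hden : 2 * εγ * εs ≤ 2 * γf (A ω) (Z ω) (X ω) * fstar (A ω) (Z ω) (X ω) := by
        nlinarith
      have hden0 : (0:ℝ) < 2 * εγ * εs := by positivity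
      have habs : |2 * γf (A ω) (Z ω) (X ω) * fstar (A ω) (Z ω) (X ω)|
          = 2 * γf (A ω) (Z ω) (X ω) * fstar (A ω) (Z ω) (X ω) :=
        abs_of_pos (by nlinarith)
      have h1 : |c ω| ≤ 2 / (2 * εγ * εs) := by
        show |cf (A ω) (Z ω) (X ω)| ≤ _
        rw [hcf_def]
        simp only
        rw [abs_div, habs]
        exact div_le_div₀ (by norm_num) hnum hden0 hden
      have h2 : 2 / (2 * εγ * εs) = B := by
        rw [hB_def]; field_simp
      rwa [h2] at h1
  -- measurability of composites
  have hγcomp : Measurable (fun ω => γf (A ω) (Z ω) (X ω)) := hγm.comp hgmeas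
  have hQcomp : Measurable (fun ω => Qf (A ω) (Z ω) (X ω)) := hQm.comp hgmeas
  have hwcomp : Measurable (fun ω => w (A ω) (Z ω) (X ω) (Y ω)) :=
    hwm.comp (hA.prodMk (hZ.prodMk (hX.prodMk hY)))
  have hcfm : Measurable (fun p : ℝ × ℝ × 𝓧 => cf p.1 p.2.1 p.2.2) := by
    rw [hcf_def]
    exact ((measurable_snd.fst.mul measurable_fst).mul
        (measurable_fst.add measurable_snd.fst)).div
      ((measurable_const.mul hγm).mul hfstarm)
  have hccomp : Measurable c := hcfm.comp hgmeas
  have hc2comp : Measurable c2 := (hccomp.neg).mul (hQcomp.div hγcomp)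
  -- integrability
  have hQ'int : Integrable (fun ω => Qf (A ω) (Z ω) (X ω)) μ :=
    integrable_condExp.congr hQ.symm
  have hV1int : Integrable (fun ω => Y ω * w (A ω) (Z ω) (X ω) (Y ω)) μ := by
    refine Integrable.mono' (hYint.abs.const_mul Mw) ((hY.mul hwcomp).aestronglyMeasurable) ?_
    filter_upwards with ω
    rw [Real.norm_eq_abs, abs_mul, mul_comm]
    exact mul_le_mul_of_nonneg_right (hwb _ _ _ _) (abs_nonneg _)
  have hV2int : Integrable (fun ω => w (A ω) (Z ω) (X ω) (Y ω)) μ := by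
    refine Integrable.mono' (integrable_const Mw) hwcomp.aestronglyMeasurable ?_
    filter_upwards with ω
    rw [Real.norm_eq_abs]; exact hwb _ _ _ _
  have hg1int : Integrable (c * fun ω => Y ω * w (A ω) (Z ω) (X ω) (Y ω)) μ := by
    refine Integrable.mono' ((hYint.abs.const_mul Mw).const_mul B)
      ((hccomp.mul (hY.mul hwcomp)).aestronglyMeasurable) ?_
    filter_upwards with ω
    rw [Pi.mul_apply, Real.norm_eq_abs, abs_mul]
    have h1 : |Y ω * w (A ω) (Z ω) (X ω) (Y ω)| ≤ Mw * |Y ω| := by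
      rw [abs_mul, mul_comm]
      exact mul_le_mul_of_nonneg_right (hwb _ _ _ _) (abs_nonneg _)
    exact mul_le_mul (hc_bd ω) h1 (abs_nonneg _) hB0.le
  have hc2_bd : ∀ ω, |c2 ω| ≤ B / εγ * |Qf (A ω) (Z ω) (X ω)| := by
    intro ω
    by_cases hc : c ω = 0
    · have hz : c2 ω = 0 := by
        show -(cf (A ω) (Z ω) (X ω)) * _ = 0
        rw [show cf (A ω) (Z ω) (X ω) = 0 from hc]
        ring
      rw [hz, abs_zero]
      positivity
    · have hγε : εγ ≤ γf (A ω) (Z ω) (X ω) := hc_ne ω hc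
      have hγ0 : (0:ℝ) < γf (A ω) (Z ω) (X ω) := lt_of_lt_of_le hεγ hγε
      show |-(cf (A ω) (Z ω) (X ω)) * (Qf (A ω) (Z ω) (X ω) / γf (A ω) (Z ω) (X ω))| ≤ _
      rw [abs_mul, abs_neg, abs_div (Qf (A ω) (Z ω) (X ω)) (γf (A ω) (Z ω) (X ω)),
        abs_of_pos hγ0]
      have hq : |Qf (A ω) (Z ω) (X ω)| / γf (A ω) (Z ω) (X ω)
          ≤ |Qf (A ω) (Z ω) (X ω)| / εγ :=
        div_le_div_of_nonneg_left (abs_nonneg _) hεγ hγε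
      calc |cf (A ω) (Z ω) (X ω)| * (|Qf (A ω) (Z ω) (X ω)| / γf (A ω) (Z ω) (X ω))
          ≤ B * (|Qf (A ω) (Z ω) (X ω)| / εγ) :=
            mul_le_mul (hc_bd ω) hq (by positivity) hB0.le
        _ = B / εγ * |Qf (A ω) (Z ω) (X ω)| := by ring
  have hg2int : Integrable (c2 * fun ω => w (A ω) (Z ω) (X ω) (Y ω)) μ := by
    refine Integrable.mono' ((hQ'int.abs.const_mul (B / εγ * Mw)))
      ((hc2comp.mul hwcomp).aestronglyMeasurable) ?_
    filter_upwards with ω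
    rw [Pi.mul_apply, Real.norm_eq_abs, abs_mul]
    calc |c2 ω| * |w (A ω) (Z ω) (X ω) (Y ω)|
        ≤ (B / εγ * |Qf (A ω) (Z ω) (X ω)|) * Mw :=
          mul_le_mul (hc2_bd ω) (hwb _ _ _ _) (abs_nonneg _) (by positivity)
      _ = B / εγ * Mw * |Qf (A ω) (Z ω) (X ω)| := by ring
  have hcQint : Integrable (fun ω => c ω * Qf (A ω) (Z ω) (X ω)) μ := by
    refine Integrable.mono' (hQ'int.abs.const_mul B)
      ((hccomp.mul hQcomp).aestronglyMeasurable) ?_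
    filter_upwards with ω
    rw [Real.norm_eq_abs, abs_mul]
    exact mul_le_mul_of_nonneg_right (hc_bd ω) (abs_nonneg _)
  -- pointwise decomposition of the correction term
  have hTeq : ∀ ω,
      Z ω * A ω * (A ω + Z ω)
          / (2 * γf (A ω) (Z ω) (X ω) * fstar (A ω) (Z ω) (X ω))
        * (Y ω * w (A ω) (Z ω) (X ω) (Y ω) - Qf (A ω) (Z ω) (X ω)
            - (Qf (A ω) (Z ω) (X ω) / γf (A ω) (Z ω) (X ω))
              * (w (A ω) (Z ω) (X ω) (Y ω) - γf (A ω) (Z ω) (X ω)))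
      = c ω * (Y ω * w (A ω) (Z ω) (X ω) (Y ω)) + c2 ω * w (A ω) (Z ω) (X ω) (Y ω) := by
    intro ω
    have hcc : c ω = Z ω * A ω * (A ω + Z ω)
        / (2 * γf (A ω) (Z ω) (X ω) * fstar (A ω) (Z ω) (X ω)) := rfl
    have hcc2 : c2 ω
        = -(c ω) * (Qf (A ω) (Z ω) (X ω) / γf (A ω) (Z ω) (X ω)) := rfl
    rw [← hcc, hcc2]
    by_cases hc : c ω = 0
    · rw [hc]; ring
    · have hγε : εγ ≤ γf (A ω) (Z ω) (X ω) := hc_ne ω hc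
      have hγ0 : γf (A ω) (Z ω) (X ω) ≠ 0 := (lt_of_lt_of_le hεγ hγε).ne'
      field_simp
      ring
  -- key identity: c·Q' + c2·γ' = 0 pointwise
  have hzero : ∀ ω, c ω * Qf (A ω) (Z ω) (X ω) + c2 ω * γf (A ω) (Z ω) (X ω) = 0 := by
    intro ω
    have hcc2 : c2 ω
        = -(c ω) * (Qf (A ω) (Z ω) (X ω) / γf (A ω) (Z ω) (X ω)) := rfl
    rw [hcc2]
    by_cases hc : c ω = 0
    · rw [hc]; ring
    · have hγε : εγ ≤ γf (A ω) (Z ω) (X ω) := hc_ne ω hc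
      have hγ0 : γf (A ω) (Z ω) (X ω) ≠ 0 := (lt_of_lt_of_le hεγ hγε).ne'
      field_simp
      ring
  -- m-measurability of c and c2
  set m : MeasurableSpace Ω :=
    MeasurableSpace.comap (fun ω => (A ω, Z ω, X ω)) inferInstance with hm_def
  have hgm' : Measurable[m] (fun ω => (A ω, Z ω, X ω)) := Measurable.of_comap_le le_rfl
  have hc_sm : StronglyMeasurable[m] c := by
    have : Measurable[m] c := hcfm.comp hgm'
    exact this.stronglyMeasurable
  have hc2_sm : StronglyMeasurable[m] c2 := by
    have : Measurable[m] c2 :=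
      ((hcfm.comp hgm').neg).mul ((hQm.comp hgm').div (hγm.comp hgm'))
    exact this.stronglyMeasurable
  -- integrals of the two pieces via the tower property and pull-out
  have h1 : ∫ ω, c ω * (Y ω * w (A ω) (Z ω) (X ω) (Y ω)) ∂μ
      = ∫ ω, c ω * Qf (A ω) (Z ω) (X ω) ∂μ := by
    have e1 : μ[(c * fun ω => Y ω * w (A ω) (Z ω) (X ω) (Y ω)) | m]
        =ᵐ[μ] c * μ[(fun ω => Y ω * w (A ω) (Z ω) (X ω) (Y ω)) | m] :=
      condExp_mul_of_stronglyMeasurable_left hc_sm hg1int hV1int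
    calc ∫ ω, c ω * (Y ω * w (A ω) (Z ω) (X ω) (Y ω)) ∂μ
        = ∫ ω, (c * fun ω => Y ω * w (A ω) (Z ω) (X ω) (Y ω)) ω ∂μ := rfl
      _ = ∫ ω, (μ[(c * fun ω => Y ω * w (A ω) (Z ω) (X ω) (Y ω)) | m]) ω ∂μ :=
          (integral_condExp hm).symm
      _ = ∫ ω, (c * μ[(fun ω => Y ω * w (A ω) (Z ω) (X ω) (Y ω)) | m]) ω ∂μ :=
          integral_congr_ae e1
      _ = ∫ ω, c ω * Qf (A ω) (Z ω) (X ω) ∂μ := by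
          refine integral_congr_ae ?_
          filter_upwards [hQ] with ω hω
          simp only [Pi.mul_apply]
          rw [← hω]
  have h2 : ∫ ω, c2 ω * w (A ω) (Z ω) (X ω) (Y ω) ∂μ
      = ∫ ω, c2 ω * γf (A ω) (Z ω) (X ω) ∂μ := by
    have e2 : μ[(c2 * fun ω => w (A ω) (Z ω) (X ω) (Y ω)) | m]
        =ᵐ[μ] c2 * μ[(fun ω => w (A ω) (Z ω) (X ω) (Y ω)) | m] :=
      condExp_mul_of_stronglyMeasurable_left hc2_sm hg2int hV2int
    calc ∫ ω, c2 ω * w (A ω) (Z ω) (X ω) (Y ω) ∂μ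
        = ∫ ω, (c2 * fun ω => w (A ω) (Z ω) (X ω) (Y ω)) ω ∂μ := rfl
      _ = ∫ ω, (μ[(c2 * fun ω => w (A ω) (Z ω) (X ω) (Y ω)) | m]) ω ∂μ :=
          (integral_condExp hm).symm
      _ = ∫ ω, (c2 * μ[(fun ω => w (A ω) (Z ω) (X ω) (Y ω)) | m]) ω ∂μ :=
          integral_congr_ae e2
      _ = ∫ ω, c2 ω * γf (A ω) (Z ω) (X ω) ∂μ := by
          refine integral_congr_ae ?_
          filter_upwards [hγ] with ω hω
          simp only [Pi.mul_apply]
          rw [← hω]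
  -- c2·γ' = -(c·Q') pointwise
  have hc2γ : (fun ω => c2 ω * γf (A ω) (Z ω) (X ω))
      = fun ω => -(c ω * Qf (A ω) (Z ω) (X ω)) := by
    funext ω
    have := hzero ω
    linarith
  -- total correction term integrates to zero
  set T : Ω → ℝ := fun ω =>
      Z ω * A ω * (A ω + Z ω)
          / (2 * γf (A ω) (Z ω) (X ω) * fstar (A ω) (Z ω) (X ω))
        * (Y ω * w (A ω) (Z ω) (X ω) (Y ω) - Qf (A ω) (Z ω) (X ω)
            - (Qf (A ω) (Z ω) (X ω) / γf (A ω) (Z ω) (X ω))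
              * (w (A ω) (Z ω) (X ω) (Y ω) - γf (A ω) (Z ω) (X ω))) with hT_def
  have hTint : Integrable T μ := by
    refine (hg1int.add hg2int).congr ?_
    filter_upwards with ω
    exact (hTeq ω).symm
  have hTzero : ∫ ω, T ω ∂μ = 0 := by
    calc ∫ ω, T ω ∂μ
        = ∫ ω, (c ω * (Y ω * w (A ω) (Z ω) (X ω) (Y ω))
            + c2 ω * w (A ω) (Z ω) (X ω) (Y ω)) ∂μ :=
          integral_congr_ae (Filter.Eventually.of_forall hTeq)
      _ = (∫ ω, c ω * (Y ω * w (A ω) (Z ω) (X ω) (Y ω)) ∂μ)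
            + ∫ ω, c2 ω * w (A ω) (Z ω) (X ω) (Y ω) ∂μ :=
          integral_add hg1int hg2int
      _ = (∫ ω, c ω * Qf (A ω) (Z ω) (X ω) ∂μ)
            + ∫ ω, c2 ω * γf (A ω) (Z ω) (X ω) ∂μ := by rw [h1, h2]
      _ = (∫ ω, c ω * Qf (A ω) (Z ω) (X ω) ∂μ)
            + ∫ ω, -(c ω * Qf (A ω) (Z ω) (X ω)) ∂μ := by rw [hc2γ]
      _ = 0 := by rw [integral_neg]; ring
  -- conclude
  set D : Ω → ℝ := fun ω =>
    Qf 1 1 (X ω) / γf 1 1 (X ω) - Qf (-1) (-1) (X ω) / γf (-1) (-1) (X ω) with hD_def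
  show ∫ ω, (T ω + D ω) ∂μ = ∫ ω, D ω ∂μ
  by_cases hDint : Integrable D μ
  · calc ∫ ω, (T ω + D ω) ∂μ = (∫ ω, T ω ∂μ) + ∫ ω, D ω ∂μ := integral_add hTint hDint
      _ = ∫ ω, D ω ∂μ := by rw [hTzero, zero_add]
  · have hnot : ¬ Integrable (fun ω => T ω + D ω) μ := by
      intro h
      refine hDint ((h.sub hTint).congr ?_)
      filter_upwards with ω
      show T ω + D ω - T ω = D ω
      ring
    rw [integral_undef hnot, integral_undef hDint]
end
end

section
/- (Consistency of the multiply robust value statistic under model M1†.) Fix a measurable regime π: X→{−1,1}. Let the nuisances f_A = f(A|Z,X), γ, and f_Z = f(Z|X) be the true ones, and let κ* and Q* be arbitrary bounded measurable candidates (with δ* = Q*/γ). Then E[ ξ̃(O; Q*, γ, κ*, f_A, f_Z) ] = V^c(π), where V^c(π) denotes the identified compliers' value E[ A·(Z+A)·Y·w_{α_Z}·I{π(X)=Z} / (2·γ·f_Z·f_A) ]. -/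
open MeasureTheory ProbabilityTheory

noncomputable section

/-- The multiply robust value statistic `ξ̃(O; Q, γ, κ, f_A, f_Z)` for a regime `π`. -/
def xiT {Ω 𝓧 : Type*} (X : Ω → 𝓧) (Z A Y : Ω → ℝ)
    (w : ℝ → ℝ → 𝓧 → ℝ → ℝ) (π : 𝓧 → ℝ)
    (Q γf : ℝ → ℝ → 𝓧 → ℝ) (κ : ℝ → 𝓧 → ℝ) (fA : ℝ → ℝ → 𝓧 → ℝ) (fZ : ℝ → 𝓧 → ℝ)
    (ω : Ω) : ℝ :=
  (if π (X ω) = Z ω then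
      A ω * (Z ω + A ω) * Y ω * w (A ω) (Z ω) (X ω) (Y ω)
        / (2 * γf (A ω) (Z ω) (X ω) * fZ (Z ω) (X ω) * fA (A ω) (Z ω) (X ω))
    else 0)
  - ((if π (X ω) = Z ω then κ (Z ω) (X ω) / fZ (Z ω) (X ω) else 0)
      - ((if π (X ω) = -1 then κ (-1) (X ω) else 0)
          + (if π (X ω) = 1 then κ 1 (X ω) else 0)))
  - (if π (X ω) = Z ω then
      A ω * (A ω + Z ω) * (Q (A ω) (Z ω) (X ω) / γf (A ω) (Z ω) (X ω))
        * (w (A ω) (Z ω) (X ω) (Y ω) - γf (A ω) (Z ω) (X ω))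
        / (2 * γf (A ω) (Z ω) (X ω) * fZ (Z ω) (X ω) * fA (A ω) (Z ω) (X ω))
    else 0)
  - ((if π (X ω) = Z ω then
        A ω * (Z ω + A ω) * Q (A ω) (Z ω) (X ω)
          / (2 * γf (A ω) (Z ω) (X ω) * fZ (Z ω) (X ω) * fA (A ω) (Z ω) (X ω))
      else 0)
      - (if π (X ω) = Z ω then
          ((-1 : ℝ) * (-1 + Z ω) * Q (-1) (Z ω) (X ω)
              / (2 * γf (-1) (Z ω) (X ω) * fZ (Z ω) (X ω))
            + (0 : ℝ) * (0 + Z ω) * Q 0 (Z ω) (X ω)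
              / (2 * γf 0 (Z ω) (X ω) * fZ (Z ω) (X ω))
            + (1 : ℝ) * (1 + Z ω) * Q 1 (Z ω) (X ω)
              / (2 * γf 1 (Z ω) (X ω) * fZ (Z ω) (X ω)))
        else 0))

lemma integrable_of_bdd' {Ω : Type*} {mΩ : MeasurableSpace Ω} {μ : Measure Ω}
    [IsProbabilityMeasure μ] {f : Ω → ℝ} (hf : AEStronglyMeasurable f μ) {C : ℝ}
    (hb : ∀ ω, |f ω| ≤ C) : Integrable f μ :=
  Integrable.mono' (integrable_const C) hf (Filter.Eventually.of_forall fun ω => by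
    simpa [Real.norm_eq_abs] using hb ω)

lemma tower_mul {Ω : Type*} {mΩ : MeasurableSpace Ω} {μ : Measure Ω} [IsProbabilityMeasure μ]
    {m : MeasurableSpace Ω} (hm : m ≤ mΩ)
    {g f : Ω → ℝ} (hg : Measurable[m] g) {C : ℝ} (hgb : ∀ ω, |g ω| ≤ C)
    (hf : Integrable f μ) :
    ∫ ω, g ω * f ω ∂μ = ∫ ω, g ω * (μ[f|m]) ω ∂μ := by
  have hgsm : StronglyMeasurable[m] g := hg.stronglyMeasurable
  have hg0 : AEStronglyMeasurable[mΩ] g μ := (hgsm.mono hm).aestronglyMeasurable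
  have hint : Integrable (fun ω => g ω * f ω) μ :=
    hf.bdd_mul hg0 (Filter.Eventually.of_forall fun x => by simpa [Real.norm_eq_abs] using hgb x)
  have h1 : μ[g * f|m] =ᵐ[μ] g * μ[f|m] :=
    condExp_mul_of_stronglyMeasurable_left hgsm hint hf
  calc ∫ ω, g ω * f ω ∂μ = ∫ ω, (μ[g * f|m]) ω ∂μ := (integral_condExp hm).symm
    _ = ∫ ω, (g * μ[f|m]) ω ∂μ := integral_congr_ae h1
    _ = ∫ ω, g ω * (μ[f|m]) ω ∂μ := rfl

lemma abs_div_le' {n d B b : ℝ} (hb : 0 < b) (hbd : b ≤ d) (hn : |n| ≤ B) :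
    |n / d| ≤ B / b := by
  rw [abs_div, abs_of_pos (lt_of_lt_of_le hb hbd)]
  exact div_le_div₀ ((abs_nonneg n).trans hn) hn hb hbd

lemma abs_ite_div_le {c : Prop} [Decidable c] {n d B b : ℝ} (hb : 0 < b) (hB : 0 ≤ B)
    (h : c → n = 0 ∨ (|n| ≤ B ∧ b ≤ d)) : |if c then n / d else 0| ≤ B / b := by
  split
  · next hc =>
    rcases h hc with h0 | ⟨h1, h2⟩
    · rw [h0, zero_div, abs_zero]; exact div_nonneg hB hb.le
    · exact abs_div_le' hb h2 h1
  · rw [abs_zero]; exact div_nonneg hB hb.le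

lemma two_mul_le2 {a b a' b' : ℝ} (ha : 0 < a) (hb : 0 < b) (h1 : a ≤ a') (h2 : b ≤ b') :
    2 * (a * b) ≤ 2 * a' * b' := by
  nlinarith [mul_le_mul h1 h2 hb.le ((ha.trans_le h1).le)]

lemma two_mul_le3 {a b c a' b' c' : ℝ} (ha : 0 < a) (hb : 0 < b) (hc : 0 < c)
    (h1 : a ≤ a') (h2 : b ≤ b') (h3 : c ≤ c') : 2 * (a * b * c) ≤ 2 * a' * b' * c' := by
  have k1 : a * b ≤ a' * b' := mul_le_mul h1 h2 hb.le ((ha.trans_le h1).le)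
  have k2 : a * b * c ≤ a' * b' * c' :=
    mul_le_mul k1 h3 hc.le (by nlinarith)
  nlinarith [k2]

set_option maxHeartbeats 2000000 in
/-- Consistency of the multiply robust value statistic under model `M1†`:
with the true `f_A = f(A|Z,X)`, `γ`, `f_Z = f(Z|X)` and arbitrary bounded measurable
candidates `κ*`, `Q*`, one has `E[ ξ̃(O; Q*, γ, κ*, f_A, f_Z) ] = V^c(π)`. -/
theorem statement_10
    {Ω : Type*} [MeasurableSpace Ω] (μ : Measure Ω) [IsProbabilityMeasure μ]
    {𝓧 : Type*} [MeasurableSpace 𝓧]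
    (X : Ω → 𝓧) (Z A Y : Ω → ℝ)
    (w : ℝ → ℝ → 𝓧 → ℝ → ℝ)
    (γf : ℝ → ℝ → 𝓧 → ℝ) (fA : ℝ → ℝ → 𝓧 → ℝ) (fZ : ℝ → 𝓧 → ℝ)
    (Qstar : ℝ → ℝ → 𝓧 → ℝ) (κstar : ℝ → 𝓧 → ℝ)
    (π : 𝓧 → ℝ)
    -- measurability
    (hX : Measurable X) (hZ : Measurable Z) (hA : Measurable A) (hY : Measurable Y)
    (hwm : Measurable fun p : ℝ × ℝ × 𝓧 × ℝ => w p.1 p.2.1 p.2.2.1 p.2.2.2)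
    (hγm : Measurable fun p : ℝ × ℝ × 𝓧 => γf p.1 p.2.1 p.2.2)
    (hfAm : Measurable fun p : ℝ × ℝ × 𝓧 => fA p.1 p.2.1 p.2.2)
    (hfZm : Measurable fun p : ℝ × 𝓧 => fZ p.1 p.2)
    (hQstarm : Measurable fun p : ℝ × ℝ × 𝓧 => Qstar p.1 p.2.1 p.2.2)
    (hκstarm : Measurable fun p : ℝ × 𝓧 => κstar p.1 p.2)
    (hπm : Measurable π)
    -- ranges
    (hZr : ∀ ω, Z ω = -1 ∨ Z ω = 1)
    (hAr : ∀ ω, A ω = -1 ∨ A ω = 0 ∨ A ω = 1)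
    (hπr : ∀ x, π x = -1 ∨ π x = 1)
    (hYint : Integrable Y μ)
    -- w is bounded and vanishes unless A = Z
    (Mw : ℝ) (hwb : ∀ a z x y, |w a z x y| ≤ Mw)
    (hwzero : ∀ a z x y, a ≠ z → w a z x y = 0)
    -- γ is the true E[w | A, Z, X], bounded away from 0 on {A = Z}
    (hγ : (fun ω => γf (A ω) (Z ω) (X ω)) =ᵐ[μ]
      μ[(fun ω => w (A ω) (Z ω) (X ω) (Y ω)) |
        MeasurableSpace.comap (fun ω => (A ω, Z ω, X ω)) inferInstance])
    (εγ : ℝ) (hεγ : 0 < εγ) (hγpos : ∀ z x, (z = -1 ∨ z = 1) → εγ ≤ γf z z x)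
    -- f_Z is the true conditional probability of Z given X, bounded away from 0
    (hfZ : ∀ z : ℝ,
      (fun ω => fZ z (X ω)) =ᵐ[μ]
        μ[Set.indicator {ω | Z ω = z} (fun _ => (1 : ℝ)) |
          MeasurableSpace.comap X inferInstance])
    (εZ : ℝ) (hεZ : 0 < εZ) (hfZpos : ∀ z x, (z = -1 ∨ z = 1) → εZ ≤ fZ z x)
    -- f_A is the true conditional probability of A given (Z,X), bounded away from 0
    (hfA : ∀ a : ℝ,
      (fun ω => fA a (Z ω) (X ω)) =ᵐ[μ]
        μ[Set.indicator {ω | A ω = a} (fun _ => (1 : ℝ)) |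
          MeasurableSpace.comap (fun ω => (Z ω, X ω)) inferInstance])
    (εA : ℝ) (hεA : 0 < εA) (hfApos : ∀ a z x, (a = -1 ∨ a = 0 ∨ a = 1) → (z = -1 ∨ z = 1) → εA ≤ fA a z x)
    -- Q* and κ* are arbitrary bounded candidates
    (MQ : ℝ) (hQstarb : ∀ a z x, |Qstar a z x| ≤ MQ)
    (Mκ : ℝ) (hκstarb : ∀ z x, |κstar z x| ≤ Mκ) :
    ∫ ω, xiT X Z A Y w π Qstar γf κstar fA fZ ω ∂μ
      = ∫ ω, (if π (X ω) = Z ω then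
          A ω * (Z ω + A ω) * Y ω * w (A ω) (Z ω) (X ω) (Y ω)
            / (2 * γf (A ω) (Z ω) (X ω) * fZ (Z ω) (X ω) * fA (A ω) (Z ω) (X ω))
        else 0) ∂μ := by
  classical
  -- basic nonnegativity
  -- measurability building blocks
  have hAZX : Measurable fun ω => (A ω, Z ω, X ω) := hA.prodMk (hZ.prodMk hX)
  have hZXp : Measurable fun ω => (Z ω, X ω) := hZ.prodMk hX
  have hm3le : MeasurableSpace.comap (fun ω => (A ω, Z ω, X ω)) inferInstance ≤ _ :=
    hAZX.comap_le
  have hm2le : MeasurableSpace.comap (fun ω => (Z ω, X ω)) inferInstance ≤ _ := hZXp.comap_le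
  have hm1le : MeasurableSpace.comap X inferInstance ≤ _ := hX.comap_le
  have hπX : Measurable fun ω => π (X ω) := hπm.comp hX
  have hsπZ : MeasurableSet {ω | π (X ω) = Z ω} := measurableSet_eq_fun hπX hZ
  have hWm : Measurable fun ω => w (A ω) (Z ω) (X ω) (Y ω) :=
    hwm.comp (hA.prodMk (hZ.prodMk (hX.prodMk hY)))
  have hγA : Measurable fun ω => γf (A ω) (Z ω) (X ω) := hγm.comp hAZX
  have hfAA : Measurable fun ω => fA (A ω) (Z ω) (X ω) := hfAm.comp hAZX
  have hfZZ : Measurable fun ω => fZ (Z ω) (X ω) := hfZm.comp hZXp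
  have hQA : Measurable fun ω => Qstar (A ω) (Z ω) (X ω) := hQstarm.comp hAZX
  have hDm : Measurable fun ω =>
      2 * γf (A ω) (Z ω) (X ω) * fZ (Z ω) (X ω) * fA (A ω) (Z ω) (X ω) :=
    ((measurable_const.mul hγA).mul hfZZ).mul hfAA
  -- the key sign fact
  have hkey : ∀ ω, A ω * (Z ω + A ω) = 0 ∨ A ω = Z ω := by
    intro ω
    rcases hAr ω with h | h | h <;> rcases hZr ω with h' | h' <;> rw [h, h'] <;> norm_num
  -- abbreviations
  set W : Ω → ℝ := fun ω => w (A ω) (Z ω) (X ω) (Y ω) with hWf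
  have hWint : Integrable W μ := integrable_of_bdd' hWm.aestronglyMeasurable
    (fun ω => hwb (A ω) (Z ω) (X ω) (Y ω))
  set γce : Ω → ℝ :=
    μ[W|MeasurableSpace.comap (fun ω => (A ω, Z ω, X ω)) inferInstance] with hγcef
  -- the six pieces
  set T1 : Ω → ℝ := fun ω => if π (X ω) = Z ω then
      A ω * (Z ω + A ω) * Y ω * w (A ω) (Z ω) (X ω) (Y ω)
        / (2 * γf (A ω) (Z ω) (X ω) * fZ (Z ω) (X ω) * fA (A ω) (Z ω) (X ω))
    else 0 with hT1f
  set T2a : Ω → ℝ := fun ω =>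
    if π (X ω) = Z ω then κstar (Z ω) (X ω) / fZ (Z ω) (X ω) else 0 with hT2af
  set T2bm : Ω → ℝ := fun ω => if π (X ω) = -1 then κstar (-1) (X ω) else 0 with hT2bmf
  set T2bp : Ω → ℝ := fun ω => if π (X ω) = 1 then κstar 1 (X ω) else 0 with hT2bpf
  set T3 : Ω → ℝ := fun ω => if π (X ω) = Z ω then
      A ω * (A ω + Z ω) * (Qstar (A ω) (Z ω) (X ω) / γf (A ω) (Z ω) (X ω))
        * (w (A ω) (Z ω) (X ω) (Y ω) - γf (A ω) (Z ω) (X ω))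
        / (2 * γf (A ω) (Z ω) (X ω) * fZ (Z ω) (X ω) * fA (A ω) (Z ω) (X ω))
    else 0 with hT3f
  set T4a : Ω → ℝ := fun ω => if π (X ω) = Z ω then
      A ω * (Z ω + A ω) * Qstar (A ω) (Z ω) (X ω)
        / (2 * γf (A ω) (Z ω) (X ω) * fZ (Z ω) (X ω) * fA (A ω) (Z ω) (X ω))
    else 0 with hT4af
  set T4b : Ω → ℝ := fun ω => if π (X ω) = Z ω then
      ((-1 : ℝ) * (-1 + Z ω) * Qstar (-1) (Z ω) (X ω)
          / (2 * γf (-1) (Z ω) (X ω) * fZ (Z ω) (X ω))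
        + (0 : ℝ) * (0 + Z ω) * Qstar 0 (Z ω) (X ω)
          / (2 * γf 0 (Z ω) (X ω) * fZ (Z ω) (X ω))
        + (1 : ℝ) * (1 + Z ω) * Qstar 1 (Z ω) (X ω)
          / (2 * γf 1 (Z ω) (X ω) * fZ (Z ω) (X ω)))
    else 0 with hT4bf
  have hxi : ∀ ω, xiT X Z A Y w π Qstar γf κstar fA fZ ω
      = T1 ω - (T2a ω - (T2bm ω + T2bp ω)) - T3 ω - (T4a ω - T4b ω) := fun ω => rfl
  -- Integrability of T1
  have hT1m : Measurable T1 := by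
    rw [hT1f]
    exact Measurable.ite hsπZ ((((hA.mul (hZ.add hA)).mul hY).mul hWm).div hDm)
      measurable_const
  have hT1b : ∀ ω, ‖T1 ω‖ ≤ (2 * Mw) / (2 * (εγ * εZ * εA)) * |Y ω| := by
    intro ω
    have hMw0 : 0 ≤ Mw := (abs_nonneg _).trans (hwb (A ω) (Z ω) (X ω) (Y ω))
    have hC0 : 0 ≤ (2 * Mw) / (2 * (εγ * εZ * εA)) * |Y ω| :=
      mul_nonneg (div_nonneg (by linarith) (by positivity)) (abs_nonneg _)
    rw [hT1f, Real.norm_eq_abs]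
    refine le_trans (abs_ite_div_le (B := 2 * Mw * |Y ω|) (b := 2 * (εγ * εZ * εA))
      (by positivity) (by positivity) ?_) (le_of_eq (by ring))
    intro _
    rcases hkey ω with h0 | hAZ
    · left; rw [h0, zero_mul, zero_mul]
    · right
      constructor
      · have habs : |A ω * (Z ω + A ω)| = 2 := by
          rcases hZr ω with hz | hz <;> rw [hAZ, hz] <;> norm_num
        calc |A ω * (Z ω + A ω) * Y ω * w (A ω) (Z ω) (X ω) (Y ω)|
            = |A ω * (Z ω + A ω)| * |Y ω| * |w (A ω) (Z ω) (X ω) (Y ω)| := by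
              rw [abs_mul, abs_mul]
          _ = 2 * |Y ω| * |w (A ω) (Z ω) (X ω) (Y ω)| := by rw [habs]
          _ ≤ 2 * |Y ω| * Mw := by
              exact mul_le_mul_of_nonneg_left (hwb _ _ _ _) (by positivity)
          _ = 2 * Mw * |Y ω| := by ring
      · refine two_mul_le3 hεγ hεZ hεA ?_ (hfZpos _ _ (hZr ω)) (hfApos _ _ _ (hAr ω) (hZr ω))
        rw [hAZ]; exact hγpos _ _ (hZr ω)
  have iT1 : Integrable T1 μ := by
    refine Integrable.mono' ((hYint.abs).const_mul ((2 * Mw) / (2 * (εγ * εZ * εA))))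
      hT1m.aestronglyMeasurable (Filter.Eventually.of_forall hT1b)
  -- Integrability of T2a, T2bm, T2bp
  have hT2am : Measurable T2a := by
    rw [hT2af]
    exact Measurable.ite hsπZ ((hκstarm.comp hZXp).div hfZZ) measurable_const
  have hT2ab : ∀ ω, |T2a ω| ≤ Mκ / εZ := by
    intro ω
    have hMκ0 : 0 ≤ Mκ := (abs_nonneg _).trans (hκstarb (Z ω) (X ω))
    rw [hT2af]
    dsimp only
    split
    · exact abs_div_le' hεZ (hfZpos _ _ (hZr ω)) (hκstarb _ _)
    · rw [abs_zero]; positivity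
  have iT2a : Integrable T2a μ := integrable_of_bdd' hT2am.aestronglyMeasurable hT2ab
  have hT2bmm : Measurable T2bm := by
    rw [hT2bmf]
    exact Measurable.ite (hπX (measurableSet_singleton (-1)))
      (hκstarm.comp (measurable_const.prodMk hX)) measurable_const
  have iT2bm : Integrable T2bm μ := by
    refine integrable_of_bdd' hT2bmm.aestronglyMeasurable (C := Mκ) fun ω => ?_
    have hMκ0 : 0 ≤ Mκ := (abs_nonneg _).trans (hκstarb (Z ω) (X ω))
    rw [hT2bmf]; dsimp only; split
    · exact hκstarb _ _
    · rw [abs_zero]; exact hMκ0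
  have hT2bpm : Measurable T2bp := by
    rw [hT2bpf]
    exact Measurable.ite (hπX (measurableSet_singleton 1))
      (hκstarm.comp (measurable_const.prodMk hX)) measurable_const
  have iT2bp : Integrable T2bp μ := by
    refine integrable_of_bdd' hT2bpm.aestronglyMeasurable (C := Mκ) fun ω => ?_
    have hMκ0 : 0 ≤ Mκ := (abs_nonneg _).trans (hκstarb (Z ω) (X ω))
    rw [hT2bpf]; dsimp only; split
    · exact hκstarb _ _
    · rw [abs_zero]; exact hMκ0
  -- Integrability of T4a
  have hT4am : Measurable T4a := by
    rw [hT4af]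
    exact Measurable.ite hsπZ (((hA.mul (hZ.add hA)).mul hQA).div hDm) measurable_const
  have hT4ab : ∀ ω, |T4a ω| ≤ (2 * MQ) / (2 * (εγ * εZ * εA)) := by
    intro ω
    have hMQ0 : 0 ≤ MQ := (abs_nonneg _).trans (hQstarb (A ω) (Z ω) (X ω))
    rw [hT4af]
    refine abs_ite_div_le (by positivity) (by linarith) ?_
    intro _
    rcases hkey ω with h0 | hAZ
    · left; rw [h0, zero_mul]
    · right
      constructor
      · have habs : |A ω * (Z ω + A ω)| = 2 := by
          rcases hZr ω with hz | hz <;> rw [hAZ, hz] <;> norm_num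
        calc |A ω * (Z ω + A ω) * Qstar (A ω) (Z ω) (X ω)|
            = |A ω * (Z ω + A ω)| * |Qstar (A ω) (Z ω) (X ω)| := abs_mul _ _
          _ = 2 * |Qstar (A ω) (Z ω) (X ω)| := by rw [habs]
          _ ≤ 2 * MQ := by nlinarith [hQstarb (A ω) (Z ω) (X ω)]
      · refine two_mul_le3 hεγ hεZ hεA ?_ (hfZpos _ _ (hZr ω)) (hfApos _ _ _ (hAr ω) (hZr ω))
        rw [hAZ]; exact hγpos _ _ (hZr ω)
  have iT4a : Integrable T4a μ := integrable_of_bdd' hT4am.aestronglyMeasurable hT4ab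
  -- Integrability of T4b
  have hγconst : ∀ a : ℝ, Measurable fun ω => γf a (Z ω) (X ω) :=
    fun a => hγm.comp (measurable_const.prodMk hZXp)
  have hQconst : ∀ a : ℝ, Measurable fun ω => Qstar a (Z ω) (X ω) :=
    fun a => hQstarm.comp (measurable_const.prodMk hZXp)
  have hfAconst : ∀ a : ℝ, Measurable fun ω => fA a (Z ω) (X ω) :=
    fun a => hfAm.comp (measurable_const.prodMk hZXp)
  have hT4bm : Measurable T4b := by
    rw [hT4bf]
    refine Measurable.ite hsπZ ?_ measurable_const
    have t : ∀ a : ℝ, Measurable fun ω =>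
        (a : ℝ) * (a + Z ω) * Qstar a (Z ω) (X ω)
          / (2 * γf a (Z ω) (X ω) * fZ (Z ω) (X ω)) := by
      intro a
      exact ((measurable_const.mul (measurable_const.add hZ)).mul (hQconst a)).div
        ((measurable_const.mul (hγconst a)).mul hfZZ)
    exact ((t (-1)).add (t 0)).add (t 1)
  have hT4term : ∀ a : ℝ, (a = -1 ∨ a = 1) → ∀ ω,
      |a * (a + Z ω) * Qstar a (Z ω) (X ω) / (2 * γf a (Z ω) (X ω) * fZ (Z ω) (X ω))|
        ≤ (2 * MQ) / (2 * (εγ * εZ)) := by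
    intro a ha ω
    have hMQ0 : 0 ≤ MQ := (abs_nonneg _).trans (hQstarb (A ω) (Z ω) (X ω))
    by_cases hz : Z ω = a
    · refine abs_div_le' (by positivity) ?_ ?_
      · refine two_mul_le2 hεγ hεZ ?_ (hfZpos _ _ (hZr ω))
        rw [hz]; exact hγpos _ _ ha
      · have habs : |a * (a + Z ω)| = 2 := by
          rw [hz]; rcases ha with h | h <;> rw [h] <;> norm_num
        calc |a * (a + Z ω) * Qstar a (Z ω) (X ω)|
            = |a * (a + Z ω)| * |Qstar a (Z ω) (X ω)| := abs_mul _ _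
          _ = 2 * |Qstar a (Z ω) (X ω)| := by rw [habs]
          _ ≤ 2 * MQ := by nlinarith [hQstarb a (Z ω) (X ω)]
    · have hz' : Z ω = -a := by
        rcases hZr ω with h | h <;> rcases ha with h' | h' <;>
          grind
      have h0 : a * (a + Z ω) = 0 := by rw [hz']; ring
      rw [h0, zero_mul, zero_div, abs_zero]
      positivity
  have hT4bb : ∀ ω, |T4b ω| ≤ (2 * MQ) / (2 * (εγ * εZ)) + (2 * MQ) / (2 * (εγ * εZ))
      + (2 * MQ) / (2 * (εγ * εZ)) := by
    intro ω
    have hMQ0 : 0 ≤ MQ := (abs_nonneg _).trans (hQstarb (A ω) (Z ω) (X ω))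
    have hct : (0:ℝ) ≤ (2 * MQ) / (2 * (εγ * εZ)) := by positivity
    rw [hT4bf]
    dsimp only
    split
    · have h1 := hT4term (-1) (Or.inl rfl) ω
      have h3 := hT4term 1 (Or.inr rfl) ω
      have h2 : (0 : ℝ) * (0 + Z ω) * Qstar 0 (Z ω) (X ω)
          / (2 * γf 0 (Z ω) (X ω) * fZ (Z ω) (X ω)) = 0 := by
        rw [zero_mul, zero_mul, zero_div]
      rw [h2]
      calc |(-1 : ℝ) * (-1 + Z ω) * Qstar (-1) (Z ω) (X ω)
            / (2 * γf (-1) (Z ω) (X ω) * fZ (Z ω) (X ω)) + 0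
            + 1 * (1 + Z ω) * Qstar 1 (Z ω) (X ω)
            / (2 * γf 1 (Z ω) (X ω) * fZ (Z ω) (X ω))|
          ≤ |(-1 : ℝ) * (-1 + Z ω) * Qstar (-1) (Z ω) (X ω)
            / (2 * γf (-1) (Z ω) (X ω) * fZ (Z ω) (X ω)) + 0|
            + |1 * (1 + Z ω) * Qstar 1 (Z ω) (X ω)
            / (2 * γf 1 (Z ω) (X ω) * fZ (Z ω) (X ω))| := abs_add_le _ _
        _ ≤ _ := by rw [add_zero]; have := abs_nonneg ((0:ℝ)); linarith
    · rw [abs_zero]; linarith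
  have iT4b : Integrable T4b μ := integrable_of_bdd' hT4bm.aestronglyMeasurable hT4bb
  -- ===== Piece 2: the κ-term =====
  have hGz : ∀ z : ℝ, Measurable fun x : 𝓧 => if π x = z then κstar z x / fZ z x else 0 := by
    intro z
    refine Measurable.ite (measurableSet_eq_fun hπm measurable_const) ?_ measurable_const
    exact (hκstarm.comp (measurable_const.prodMk measurable_id)).div
      (hfZm.comp (measurable_const.prodMk measurable_id))
  have hgzb : ∀ (z : ℝ) ω, |if π (X ω) = z then κstar z (X ω) / fZ z (X ω) else 0| ≤ Mκ / εZ := by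
    intro z ω
    have hMκ0 : 0 ≤ Mκ := (abs_nonneg _).trans (hκstarb z (X ω))
    split
    · exact abs_div_le' hεZ (hfZpos _ _ (by rename_i h; rw [← h]; exact hπr (X ω))) (hκstarb _ _)
    · rw [abs_zero]; positivity
  have hχZint : ∀ z : ℝ, Integrable (Set.indicator {ω | Z ω = z} fun _ => (1 : ℝ)) μ := by
    intro z
    refine integrable_of_bdd' (C := 1) ?_ ?_
    · exact (measurable_const.indicator (hZ (measurableSet_singleton z))).aestronglyMeasurable
    · intro ω; rw [Set.indicator_apply]; split <;> norm_num
  have key2 : ∀ z : ℝ,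
      ∫ ω, (if π (X ω) = z then κstar z (X ω) / fZ z (X ω) else 0)
        * Set.indicator {ω | Z ω = z} (fun _ => (1 : ℝ)) ω ∂μ
      = ∫ ω, (if π (X ω) = z then κstar z (X ω) else 0) ∂μ := by
    intro z
    have hgzm : Measurable[MeasurableSpace.comap X inferInstance]
        fun ω => if π (X ω) = z then κstar z (X ω) / fZ z (X ω) else 0 :=
      (hGz z).comp (Measurable.of_comap_le le_rfl)
    calc ∫ ω, (if π (X ω) = z then κstar z (X ω) / fZ z (X ω) else 0)
          * Set.indicator {ω | Z ω = z} (fun _ => (1 : ℝ)) ω ∂μ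
        = ∫ ω, (if π (X ω) = z then κstar z (X ω) / fZ z (X ω) else 0)
            * (μ[Set.indicator {ω | Z ω = z} (fun _ => (1 : ℝ))|
              MeasurableSpace.comap X inferInstance]) ω ∂μ :=
          tower_mul hm1le hgzm (hgzb z) (hχZint z)
      _ = ∫ ω, (if π (X ω) = z then κstar z (X ω) / fZ z (X ω) else 0) * fZ z (X ω) ∂μ := by
          refine integral_congr_ae ?_
          filter_upwards [hfZ z] with ω h
          rw [← h]
      _ = ∫ ω, (if π (X ω) = z then κstar z (X ω) else 0) ∂μ := by
          refine integral_congr_ae (Filter.Eventually.of_forall fun ω => ?_)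
          dsimp only
          by_cases h : π (X ω) = z
          · rw [if_pos h, if_pos h,
              div_mul_cancel₀ _ (ne_of_gt (lt_of_lt_of_le hεZ (hfZpos z (X ω) (by rw [← h]; exact hπr (X ω)))))]
          · rw [if_neg h, if_neg h, zero_mul]
  have E2 : ∫ ω, T2a ω ∂μ = ∫ ω, T2bm ω ∂μ + ∫ ω, T2bp ω ∂μ := by
    have hdec : ∀ ω, T2a ω =
        (if π (X ω) = -1 then κstar (-1) (X ω) / fZ (-1) (X ω) else 0)
          * Set.indicator {ω | Z ω = -1} (fun _ => (1 : ℝ)) ω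
        + (if π (X ω) = 1 then κstar 1 (X ω) / fZ 1 (X ω) else 0)
          * Set.indicator {ω | Z ω = 1} (fun _ => (1 : ℝ)) ω := by
      intro ω
      rw [hT2af]
      dsimp only
      rcases hZr ω with h | h <;>
        simp only [Set.indicator_apply, Set.mem_setOf_eq, h] <;> norm_num
    have i1 : Integrable (fun ω =>
        (if π (X ω) = -1 then κstar (-1) (X ω) / fZ (-1) (X ω) else 0)
          * Set.indicator {ω | Z ω = -1} (fun _ => (1 : ℝ)) ω) μ :=
      (hχZint (-1)).bdd_mul ((hGz (-1)).comp hX).aestronglyMeasurable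
        (Filter.Eventually.of_forall fun ω => by rw [Real.norm_eq_abs]; exact hgzb (-1) ω)
    have i2 : Integrable (fun ω =>
        (if π (X ω) = 1 then κstar 1 (X ω) / fZ 1 (X ω) else 0)
          * Set.indicator {ω | Z ω = 1} (fun _ => (1 : ℝ)) ω) μ :=
      (hχZint 1).bdd_mul ((hGz 1).comp hX).aestronglyMeasurable
        (Filter.Eventually.of_forall fun ω => by rw [Real.norm_eq_abs]; exact hgzb 1 ω)
    calc ∫ ω, T2a ω ∂μ
        = ∫ ω, ((if π (X ω) = -1 then κstar (-1) (X ω) / fZ (-1) (X ω) else 0)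
            * Set.indicator {ω | Z ω = -1} (fun _ => (1 : ℝ)) ω
          + (if π (X ω) = 1 then κstar 1 (X ω) / fZ 1 (X ω) else 0)
            * Set.indicator {ω | Z ω = 1} (fun _ => (1 : ℝ)) ω) ∂μ :=
          integral_congr_ae (Filter.Eventually.of_forall hdec)
      _ = (∫ ω, (if π (X ω) = -1 then κstar (-1) (X ω) / fZ (-1) (X ω) else 0)
            * Set.indicator {ω | Z ω = -1} (fun _ => (1 : ℝ)) ω ∂μ)
          + ∫ ω, (if π (X ω) = 1 then κstar 1 (X ω) / fZ 1 (X ω) else 0)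
            * Set.indicator {ω | Z ω = 1} (fun _ => (1 : ℝ)) ω ∂μ := integral_add i1 i2
      _ = ∫ ω, T2bm ω ∂μ + ∫ ω, T2bp ω ∂μ := by
          simp only [hT2bmf, hT2bpf]
          rw [key2 (-1), key2 1]
  -- ===== Piece 4: the Q-term =====
  have hGa : ∀ a : ℝ, Measurable fun p : ℝ × 𝓧 =>
      if π p.2 = p.1 then a * (p.1 + a) * Qstar a p.1 p.2
        / (2 * γf a p.1 p.2 * fZ p.1 p.2 * fA a p.1 p.2) else 0 := by
    intro a
    refine Measurable.ite (measurableSet_eq_fun (hπm.comp measurable_snd) measurable_fst)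
      ?_ measurable_const
    exact ((measurable_const.mul (measurable_fst.add measurable_const)).mul
        (hQstarm.comp (measurable_const.prodMk measurable_id))).div
      (((measurable_const.mul (hγm.comp (measurable_const.prodMk measurable_id))).mul
        hfZm).mul (hfAm.comp (measurable_const.prodMk measurable_id)))
  have hχAint : ∀ a : ℝ, Integrable (Set.indicator {ω | A ω = a} fun _ => (1 : ℝ)) μ := by
    intro a
    refine integrable_of_bdd' (C := 1) ?_ ?_
    · exact (measurable_const.indicator (hA (measurableSet_singleton a))).aestronglyMeasurable
    · intro ω; rw [Set.indicator_apply]; split <;> norm_num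
  have hgab : ∀ a : ℝ, (a = -1 ∨ a = 0 ∨ a = 1) → ∀ ω,
      |if π (X ω) = Z ω then a * (Z ω + a) * Qstar a (Z ω) (X ω)
        / (2 * γf a (Z ω) (X ω) * fZ (Z ω) (X ω) * fA a (Z ω) (X ω)) else 0|
      ≤ (2 * MQ) / (2 * (εγ * εZ * εA)) := by
    intro a ha ω
    have hMQ0 : 0 ≤ MQ := (abs_nonneg _).trans (hQstarb a (Z ω) (X ω))
    refine abs_ite_div_le (by positivity) (by linarith) ?_
    intro _
    rcases ha with rfl | rfl | rfl
    · by_cases hz : Z ω = -1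
      · right
        constructor
        · have habs : |(-1 : ℝ) * (Z ω + -1)| = 2 := by rw [hz]; norm_num
          calc |(-1 : ℝ) * (Z ω + -1) * Qstar (-1) (Z ω) (X ω)|
              = |(-1 : ℝ) * (Z ω + -1)| * |Qstar (-1) (Z ω) (X ω)| := abs_mul _ _
            _ = 2 * |Qstar (-1) (Z ω) (X ω)| := by rw [habs]
            _ ≤ 2 * MQ := by nlinarith [hQstarb (-1) (Z ω) (X ω)]
        · refine two_mul_le3 hεγ hεZ hεA ?_ (hfZpos _ _ (hZr ω)) (hfApos _ _ _ (by norm_num) (hZr ω))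
          rw [hz]; exact hγpos _ _ (Or.inl rfl)
      · left
        have hz1 : Z ω = 1 := (hZr ω).resolve_left hz
        rw [hz1]; ring
    · left; ring
    · by_cases hz : Z ω = 1
      · right
        constructor
        · have habs : |(1 : ℝ) * (Z ω + 1)| = 2 := by rw [hz]; norm_num
          calc |(1 : ℝ) * (Z ω + 1) * Qstar 1 (Z ω) (X ω)|
              = |(1 : ℝ) * (Z ω + 1)| * |Qstar 1 (Z ω) (X ω)| := abs_mul _ _
            _ = 2 * |Qstar 1 (Z ω) (X ω)| := by rw [habs]
            _ ≤ 2 * MQ := by nlinarith [hQstarb 1 (Z ω) (X ω)]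
        · refine two_mul_le3 hεγ hεZ hεA ?_ (hfZpos _ _ (hZr ω)) (hfApos _ _ _ (by norm_num) (hZr ω))
          rw [hz]; exact hγpos _ _ (Or.inr rfl)
      · left
        have hz1 : Z ω = -1 := (hZr ω).resolve_right hz
        rw [hz1]; ring
  have key4 : ∀ a : ℝ, (a = -1 ∨ a = 0 ∨ a = 1) →
      ∫ ω, (if π (X ω) = Z ω then a * (Z ω + a) * Qstar a (Z ω) (X ω)
          / (2 * γf a (Z ω) (X ω) * fZ (Z ω) (X ω) * fA a (Z ω) (X ω)) else 0)
        * Set.indicator {ω | A ω = a} (fun _ => (1 : ℝ)) ω ∂μ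
      = ∫ ω, (if π (X ω) = Z ω then a * (Z ω + a) * Qstar a (Z ω) (X ω)
          / (2 * γf a (Z ω) (X ω) * fZ (Z ω) (X ω)) else 0) ∂μ := by
    intro a ha
    have hgam : Measurable[MeasurableSpace.comap (fun ω => (Z ω, X ω)) inferInstance]
        fun ω => if π (X ω) = Z ω then a * (Z ω + a) * Qstar a (Z ω) (X ω)
          / (2 * γf a (Z ω) (X ω) * fZ (Z ω) (X ω) * fA a (Z ω) (X ω)) else 0 :=
      (hGa a).comp (Measurable.of_comap_le le_rfl)
    calc ∫ ω, (if π (X ω) = Z ω then a * (Z ω + a) * Qstar a (Z ω) (X ω)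
          / (2 * γf a (Z ω) (X ω) * fZ (Z ω) (X ω) * fA a (Z ω) (X ω)) else 0)
          * Set.indicator {ω | A ω = a} (fun _ => (1 : ℝ)) ω ∂μ
        = ∫ ω, (if π (X ω) = Z ω then a * (Z ω + a) * Qstar a (Z ω) (X ω)
            / (2 * γf a (Z ω) (X ω) * fZ (Z ω) (X ω) * fA a (Z ω) (X ω)) else 0)
            * (μ[Set.indicator {ω | A ω = a} (fun _ => (1 : ℝ))|
              MeasurableSpace.comap (fun ω => (Z ω, X ω)) inferInstance]) ω ∂μ :=
          tower_mul hm2le hgam (hgab a ha) (hχAint a)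
      _ = ∫ ω, (if π (X ω) = Z ω then a * (Z ω + a) * Qstar a (Z ω) (X ω)
            / (2 * γf a (Z ω) (X ω) * fZ (Z ω) (X ω) * fA a (Z ω) (X ω)) else 0)
            * fA a (Z ω) (X ω) ∂μ := by
          refine integral_congr_ae ?_
          filter_upwards [hfA a] with ω h
          rw [← h]
      _ = ∫ ω, (if π (X ω) = Z ω then a * (Z ω + a) * Qstar a (Z ω) (X ω)
          / (2 * γf a (Z ω) (X ω) * fZ (Z ω) (X ω)) else 0) ∂μ := by
          refine integral_congr_ae (Filter.Eventually.of_forall fun ω => ?_)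
          dsimp only
          by_cases h : π (X ω) = Z ω
          · rw [if_pos h, if_pos h, ← div_div,
              div_mul_cancel₀ _ (ne_of_gt (lt_of_lt_of_le hεA (hfApos a (Z ω) (X ω) ha (hZr ω))))]
          · rw [if_neg h, if_neg h, zero_mul]
  have hqm : ∀ a : ℝ, Measurable fun ω =>
      if π (X ω) = Z ω then a * (Z ω + a) * Qstar a (Z ω) (X ω)
        / (2 * γf a (Z ω) (X ω) * fZ (Z ω) (X ω)) else 0 := by
    intro a
    refine Measurable.ite hsπZ ?_ measurable_const
    exact ((measurable_const.mul (hZ.add measurable_const)).mul (hQconst a)).div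
      ((measurable_const.mul (hγconst a)).mul hfZZ)
  have hqb : ∀ a : ℝ, (a = -1 ∨ a = 0 ∨ a = 1) → ∀ ω,
      |if π (X ω) = Z ω then a * (Z ω + a) * Qstar a (Z ω) (X ω)
        / (2 * γf a (Z ω) (X ω) * fZ (Z ω) (X ω)) else 0|
      ≤ (2 * MQ) / (2 * (εγ * εZ)) := by
    intro a ha ω
    have hMQ0 : 0 ≤ MQ := (abs_nonneg _).trans (hQstarb a (Z ω) (X ω))
    refine abs_ite_div_le (by positivity) (by linarith) ?_
    intro _
    rcases ha with rfl | rfl | rfl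
    · by_cases hz : Z ω = -1
      · right
        constructor
        · have habs : |(-1 : ℝ) * (Z ω + -1)| = 2 := by rw [hz]; norm_num
          calc |(-1 : ℝ) * (Z ω + -1) * Qstar (-1) (Z ω) (X ω)|
              = |(-1 : ℝ) * (Z ω + -1)| * |Qstar (-1) (Z ω) (X ω)| := abs_mul _ _
            _ = 2 * |Qstar (-1) (Z ω) (X ω)| := by rw [habs]
            _ ≤ 2 * MQ := by nlinarith [hQstarb (-1) (Z ω) (X ω)]
        · refine two_mul_le2 hεγ hεZ ?_ (hfZpos _ _ (hZr ω))
          rw [hz]; exact hγpos _ _ (Or.inl rfl)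
      · left
        have hz1 : Z ω = 1 := (hZr ω).resolve_left hz
        rw [hz1]; ring
    · left; ring
    · by_cases hz : Z ω = 1
      · right
        constructor
        · have habs : |(1 : ℝ) * (Z ω + 1)| = 2 := by rw [hz]; norm_num
          calc |(1 : ℝ) * (Z ω + 1) * Qstar 1 (Z ω) (X ω)|
              = |(1 : ℝ) * (Z ω + 1)| * |Qstar 1 (Z ω) (X ω)| := abs_mul _ _
            _ = 2 * |Qstar 1 (Z ω) (X ω)| := by rw [habs]
            _ ≤ 2 * MQ := by nlinarith [hQstarb 1 (Z ω) (X ω)]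
        · refine two_mul_le2 hεγ hεZ ?_ (hfZpos _ _ (hZr ω))
          rw [hz]; exact hγpos _ _ (Or.inr rfl)
      · left
        have hz1 : Z ω = -1 := (hZr ω).resolve_right hz
        rw [hz1]; ring
  have E4 : ∫ ω, T4a ω ∂μ = ∫ ω, T4b ω ∂μ := by
    have hdec : ∀ ω, T4a ω =
        (if π (X ω) = Z ω then (-1 : ℝ) * (Z ω + -1) * Qstar (-1) (Z ω) (X ω)
          / (2 * γf (-1) (Z ω) (X ω) * fZ (Z ω) (X ω) * fA (-1) (Z ω) (X ω)) else 0)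
          * Set.indicator {ω | A ω = -1} (fun _ => (1 : ℝ)) ω
        + (if π (X ω) = Z ω then (0 : ℝ) * (Z ω + 0) * Qstar 0 (Z ω) (X ω)
          / (2 * γf 0 (Z ω) (X ω) * fZ (Z ω) (X ω) * fA 0 (Z ω) (X ω)) else 0)
          * Set.indicator {ω | A ω = 0} (fun _ => (1 : ℝ)) ω
        + (if π (X ω) = Z ω then (1 : ℝ) * (Z ω + 1) * Qstar 1 (Z ω) (X ω)
          / (2 * γf 1 (Z ω) (X ω) * fZ (Z ω) (X ω) * fA 1 (Z ω) (X ω)) else 0)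
          * Set.indicator {ω | A ω = 1} (fun _ => (1 : ℝ)) ω := by
      intro ω
      rw [hT4af]
      dsimp only
      rcases hAr ω with h | h | h <;>
        simp only [Set.indicator_apply, Set.mem_setOf_eq, h] <;> norm_num
    have ip : ∀ a : ℝ, (a = -1 ∨ a = 0 ∨ a = 1) → Integrable (fun ω =>
        (if π (X ω) = Z ω then a * (Z ω + a) * Qstar a (Z ω) (X ω)
          / (2 * γf a (Z ω) (X ω) * fZ (Z ω) (X ω) * fA a (Z ω) (X ω)) else 0)
          * Set.indicator {ω | A ω = a} (fun _ => (1 : ℝ)) ω) μ := fun a ha =>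
      (hχAint a).bdd_mul ((hGa a).comp hZXp).aestronglyMeasurable
        (Filter.Eventually.of_forall fun ω => by rw [Real.norm_eq_abs]; exact hgab a ha ω)
    have iq : ∀ a : ℝ, (a = -1 ∨ a = 0 ∨ a = 1) → Integrable (fun ω =>
        if π (X ω) = Z ω then a * (Z ω + a) * Qstar a (Z ω) (X ω)
          / (2 * γf a (Z ω) (X ω) * fZ (Z ω) (X ω)) else 0) μ := fun a ha =>
      integrable_of_bdd' (hqm a).aestronglyMeasurable (hqb a ha)
    calc ∫ ω, T4a ω ∂μ
        = ∫ ω, ((if π (X ω) = Z ω then (-1 : ℝ) * (Z ω + -1) * Qstar (-1) (Z ω) (X ω)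
          / (2 * γf (-1) (Z ω) (X ω) * fZ (Z ω) (X ω) * fA (-1) (Z ω) (X ω)) else 0)
          * Set.indicator {ω | A ω = -1} (fun _ => (1 : ℝ)) ω
        + (if π (X ω) = Z ω then (0 : ℝ) * (Z ω + 0) * Qstar 0 (Z ω) (X ω)
          / (2 * γf 0 (Z ω) (X ω) * fZ (Z ω) (X ω) * fA 0 (Z ω) (X ω)) else 0)
          * Set.indicator {ω | A ω = 0} (fun _ => (1 : ℝ)) ω
        + (if π (X ω) = Z ω then (1 : ℝ) * (Z ω + 1) * Qstar 1 (Z ω) (X ω)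
          / (2 * γf 1 (Z ω) (X ω) * fZ (Z ω) (X ω) * fA 1 (Z ω) (X ω)) else 0)
          * Set.indicator {ω | A ω = 1} (fun _ => (1 : ℝ)) ω) ∂μ :=
          integral_congr_ae (Filter.Eventually.of_forall hdec)
      _ = (∫ ω, (if π (X ω) = Z ω then (-1 : ℝ) * (Z ω + -1) * Qstar (-1) (Z ω) (X ω)
          / (2 * γf (-1) (Z ω) (X ω) * fZ (Z ω) (X ω) * fA (-1) (Z ω) (X ω)) else 0)
          * Set.indicator {ω | A ω = -1} (fun _ => (1 : ℝ)) ω ∂μ)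
          + (∫ ω, (if π (X ω) = Z ω then (0 : ℝ) * (Z ω + 0) * Qstar 0 (Z ω) (X ω)
          / (2 * γf 0 (Z ω) (X ω) * fZ (Z ω) (X ω) * fA 0 (Z ω) (X ω)) else 0)
          * Set.indicator {ω | A ω = 0} (fun _ => (1 : ℝ)) ω ∂μ)
          + ∫ ω, (if π (X ω) = Z ω then (1 : ℝ) * (Z ω + 1) * Qstar 1 (Z ω) (X ω)
          / (2 * γf 1 (Z ω) (X ω) * fZ (Z ω) (X ω) * fA 1 (Z ω) (X ω)) else 0)
          * Set.indicator {ω | A ω = 1} (fun _ => (1 : ℝ)) ω ∂μ := by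
          exact (integral_add ((ip (-1) (by norm_num)).add (ip 0 (by norm_num)))
            (ip 1 (by norm_num))).trans (congrArg (fun t => t + _)
              (integral_add (ip (-1) (by norm_num)) (ip 0 (by norm_num))))
      _ = (∫ ω, (if π (X ω) = Z ω then (-1 : ℝ) * (Z ω + -1) * Qstar (-1) (Z ω) (X ω)
          / (2 * γf (-1) (Z ω) (X ω) * fZ (Z ω) (X ω)) else 0) ∂μ)
          + (∫ ω, (if π (X ω) = Z ω then (0 : ℝ) * (Z ω + 0) * Qstar 0 (Z ω) (X ω)
          / (2 * γf 0 (Z ω) (X ω) * fZ (Z ω) (X ω)) else 0) ∂μ)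
          + ∫ ω, (if π (X ω) = Z ω then (1 : ℝ) * (Z ω + 1) * Qstar 1 (Z ω) (X ω)
          / (2 * γf 1 (Z ω) (X ω) * fZ (Z ω) (X ω)) else 0) ∂μ := by
          rw [key4 (-1) (by norm_num), key4 0 (by norm_num), key4 1 (by norm_num)]
      _ = ∫ ω, ((if π (X ω) = Z ω then (-1 : ℝ) * (Z ω + -1) * Qstar (-1) (Z ω) (X ω)
          / (2 * γf (-1) (Z ω) (X ω) * fZ (Z ω) (X ω)) else 0)
          + (if π (X ω) = Z ω then (0 : ℝ) * (Z ω + 0) * Qstar 0 (Z ω) (X ω)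
          / (2 * γf 0 (Z ω) (X ω) * fZ (Z ω) (X ω)) else 0)
          + (if π (X ω) = Z ω then (1 : ℝ) * (Z ω + 1) * Qstar 1 (Z ω) (X ω)
          / (2 * γf 1 (Z ω) (X ω) * fZ (Z ω) (X ω)) else 0)) ∂μ := by
          exact (congrArg (fun t => t + _)
            (integral_add (iq (-1) (by norm_num)) (iq 0 (by norm_num))).symm).trans
            (integral_add ((iq (-1) (by norm_num)).add (iq 0 (by norm_num)))
              (iq 1 (by norm_num))).symm
      _ = ∫ ω, T4b ω ∂μ := by
          refine integral_congr_ae (Filter.Eventually.of_forall fun ω => ?_)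
          rw [hT4bf]
          dsimp only
          by_cases h : π (X ω) = Z ω
          · simp only [if_pos h]; ring
          · simp only [if_neg h]; ring
  -- ===== Piece 3: the γ-term =====
  have hχ3G : Measurable fun p : ℝ × ℝ × 𝓧 => if p.1 = p.2.1 then (0 : ℝ) else 1 :=
    Measurable.ite (measurableSet_eq_fun measurable_fst (measurable_fst.comp measurable_snd))
      measurable_const measurable_const
  have hχ3m : Measurable[MeasurableSpace.comap (fun ω => (A ω, Z ω, X ω)) inferInstance]
      fun ω => if A ω = Z ω then (0 : ℝ) else 1 :=
    hχ3G.comp (Measurable.of_comap_le le_rfl)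
  have hχW0 : (fun ω => (if A ω = Z ω then (0 : ℝ) else 1) * W ω) = fun _ => (0 : ℝ) := by
    funext ω
    by_cases h : A ω = Z ω
    · rw [if_pos h, zero_mul]
    · rw [if_neg h, one_mul]
      show w (A ω) (Z ω) (X ω) (Y ω) = 0
      exact hwzero _ _ _ _ h
  have hint0 : Integrable ((fun ω => if A ω = Z ω then (0 : ℝ) else 1) * W) μ := by
    rw [show ((fun ω => if A ω = Z ω then (0 : ℝ) else 1) * W) = fun _ => (0 : ℝ) from hχW0]
    exact integrable_const 0
  have hmul : μ[(fun ω => if A ω = Z ω then (0 : ℝ) else 1) * W|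
      MeasurableSpace.comap (fun ω => (A ω, Z ω, X ω)) inferInstance] =ᵐ[μ]
      (fun ω => if A ω = Z ω then (0 : ℝ) else 1)
        * μ[W|MeasurableSpace.comap (fun ω => (A ω, Z ω, X ω)) inferInstance] :=
    condExp_mul_of_stronglyMeasurable_left hχ3m.stronglyMeasurable hint0 hWint
  have hce0 : μ[(fun ω => if A ω = Z ω then (0 : ℝ) else 1) * W|
      MeasurableSpace.comap (fun ω => (A ω, Z ω, X ω)) inferInstance] = 0 := by
    rw [show ((fun ω => if A ω = Z ω then (0 : ℝ) else 1) * W) = fun _ => (0 : ℝ) from hχW0]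
    exact condExp_zero
  have hzero : ∀ᵐ ω ∂μ, A ω ≠ Z ω → γf (A ω) (Z ω) (X ω) = 0 := by
    filter_upwards [hmul, hγ] with ω h1 h2
    intro hne
    rw [hce0] at h1
    have h1' : (0 : ℝ) = (if A ω = Z ω then (0 : ℝ) else 1)
        * (μ[W|MeasurableSpace.comap (fun ω => (A ω, Z ω, X ω)) inferInstance]) ω := h1
    rw [if_neg hne, one_mul] at h1'
    have h2' : γf (A ω) (Z ω) (X ω) = γce ω := h2
    rw [h2', hγcef]
    exact h1'.symm
  set g3 : Ω → ℝ := fun ω => if π (X ω) = Z ω ∧ A ω = Z ω then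
      A ω * (A ω + Z ω) * (Qstar (A ω) (Z ω) (X ω) / γf (A ω) (Z ω) (X ω))
        / (2 * γf (A ω) (Z ω) (X ω) * fZ (Z ω) (X ω) * fA (A ω) (Z ω) (X ω))
    else 0 with hg3f
  have hg3m3 : Measurable[MeasurableSpace.comap (fun ω => (A ω, Z ω, X ω)) inferInstance] g3 := by
    rw [hg3f]
    have hG : Measurable fun p : ℝ × ℝ × 𝓧 =>
        if π p.2.2 = p.2.1 ∧ p.1 = p.2.1 then
          p.1 * (p.1 + p.2.1) * (Qstar p.1 p.2.1 p.2.2 / γf p.1 p.2.1 p.2.2)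
            / (2 * γf p.1 p.2.1 p.2.2 * fZ p.2.1 p.2.2 * fA p.1 p.2.1 p.2.2)
        else 0 := by
      refine Measurable.ite ?_ ?_ measurable_const
      · exact (measurableSet_eq_fun (hπm.comp (measurable_snd.comp measurable_snd))
          (measurable_fst.comp measurable_snd)).inter
          (measurableSet_eq_fun measurable_fst (measurable_fst.comp measurable_snd))
      · exact ((measurable_fst.mul (measurable_fst.add
          (measurable_fst.comp measurable_snd))).mul (hQstarm.div hγm)).div
          (((measurable_const.mul hγm).mul (hfZm.comp
            ((measurable_fst.comp measurable_snd).prodMk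
              (measurable_snd.comp measurable_snd)))).mul hfAm)
    exact hG.comp (Measurable.of_comap_le le_rfl)
  have hg3amb : Measurable g3 := by
    rw [hg3f]
    exact Measurable.ite (hsπZ.inter (measurableSet_eq_fun hA hZ))
      (((hA.mul (hA.add hZ)).mul (hQA.div hγA)).div hDm) measurable_const
  have hg3b : ∀ ω, |g3 ω| ≤ 2 * (MQ / εγ) / (2 * (εγ * εZ * εA)) := by
    intro ω
    have hMQ0 : 0 ≤ MQ := (abs_nonneg _).trans (hQstarb (A ω) (Z ω) (X ω))
    rw [hg3f]
    dsimp only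
    refine abs_ite_div_le (by positivity) (by positivity) ?_
    rintro ⟨hπ, hAZ⟩
    right
    constructor
    · have habs : |A ω * (A ω + Z ω)| = 2 := by
        rcases hZr ω with hz | hz <;> rw [hAZ, hz] <;> norm_num
      have hQγ : |Qstar (A ω) (Z ω) (X ω) / γf (A ω) (Z ω) (X ω)| ≤ MQ / εγ := by
        refine abs_div_le' hεγ ?_ (hQstarb _ _ _)
        rw [hAZ]; exact hγpos _ _ (hZr ω)
      calc |A ω * (A ω + Z ω) * (Qstar (A ω) (Z ω) (X ω) / γf (A ω) (Z ω) (X ω))|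
          = |A ω * (A ω + Z ω)| * |Qstar (A ω) (Z ω) (X ω) / γf (A ω) (Z ω) (X ω)| :=
            abs_mul _ _
        _ = 2 * |Qstar (A ω) (Z ω) (X ω) / γf (A ω) (Z ω) (X ω)| := by rw [habs]
        _ ≤ 2 * (MQ / εγ) := by nlinarith [abs_nonneg (Qstar (A ω) (Z ω) (X ω)
            / γf (A ω) (Z ω) (X ω))]
    · refine two_mul_le3 hεγ hεZ hεA ?_ (hfZpos _ _ (hZr ω)) (hfApos _ _ _ (hAr ω) (hZr ω))
      rw [hAZ]; exact hγpos _ _ (hZr ω)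
  have hT3g : T3 =ᵐ[μ] fun ω => g3 ω * (W ω - γce ω) := by
    filter_upwards [hzero, hγ] with ω h0 h2
    have h2' : γf (A ω) (Z ω) (X ω) = γce ω := h2
    rw [hT3f, hg3f]
    dsimp only
    by_cases hAZ : A ω = Z ω
    · by_cases hπ : π (X ω) = Z ω
      · rw [if_pos hπ, if_pos (⟨hπ, hAZ⟩ : π (X ω) = Z ω ∧ A ω = Z ω), ← h2']
        exact mul_div_right_comm _ _ _
      · rw [if_neg hπ, if_neg (fun hc => hπ hc.1 :
          ¬(π (X ω) = Z ω ∧ A ω = Z ω)), zero_mul]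
    · have hz0 : γf (A ω) (Z ω) (X ω) = 0 := h0 hAZ
      rw [if_neg (fun hc => hAZ hc.2 : ¬(π (X ω) = Z ω ∧ A ω = Z ω)), zero_mul]
      by_cases hπ : π (X ω) = Z ω
      · rw [if_pos hπ, hz0]
        simp
      · rw [if_neg hπ]
  have iγce : Integrable γce μ := by rw [hγcef]; exact integrable_condExp
  have ig3sub : Integrable (fun ω => g3 ω * (W ω - γce ω)) μ :=
    (hWint.sub iγce).bdd_mul hg3amb.aestronglyMeasurable
      (Filter.Eventually.of_forall fun ω => by rw [Real.norm_eq_abs]; exact hg3b ω)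
  have iT3 : Integrable T3 μ := ig3sub.congr hT3g.symm
  have ig3W : Integrable (fun ω => g3 ω * W ω) μ :=
    hWint.bdd_mul hg3amb.aestronglyMeasurable
      (Filter.Eventually.of_forall fun ω => by rw [Real.norm_eq_abs]; exact hg3b ω)
  have ig3ce : Integrable (fun ω => g3 ω * γce ω) μ :=
    iγce.bdd_mul hg3amb.aestronglyMeasurable
      (Filter.Eventually.of_forall fun ω => by rw [Real.norm_eq_abs]; exact hg3b ω)
  have tmw : ∫ ω, g3 ω * W ω ∂μ = ∫ ω, g3 ω * γce ω ∂μ := by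
    have t := tower_mul hm3le hg3m3 hg3b hWint
    rw [← hγcef] at t
    exact t
  have E3 : ∫ ω, T3 ω ∂μ = 0 := by
    calc ∫ ω, T3 ω ∂μ = ∫ ω, g3 ω * (W ω - γce ω) ∂μ := integral_congr_ae hT3g
      _ = ∫ ω, (g3 ω * W ω - g3 ω * γce ω) ∂μ := by simp_rw [mul_sub]
      _ = (∫ ω, g3 ω * W ω ∂μ) - ∫ ω, g3 ω * γce ω ∂μ := integral_sub ig3W ig3ce
      _ = 0 := by rw [tmw, sub_self]
  -- ===== Final assembly =====
  have i2b : Integrable (fun ω => T2bm ω + T2bp ω) μ := iT2bm.add iT2bp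
  have i2 : Integrable (fun ω => T2a ω - (T2bm ω + T2bp ω)) μ := iT2a.sub i2b
  have i12 : Integrable (fun ω => T1 ω - (T2a ω - (T2bm ω + T2bp ω))) μ := iT1.sub i2
  have i123 : Integrable (fun ω => T1 ω - (T2a ω - (T2bm ω + T2bp ω)) - T3 ω) μ := i12.sub iT3
  have i4 : Integrable (fun ω => T4a ω - T4b ω) μ := iT4a.sub iT4b
  have hsplit : ∫ ω, (T1 ω - (T2a ω - (T2bm ω + T2bp ω)) - T3 ω - (T4a ω - T4b ω)) ∂μ
      = (∫ ω, T1 ω ∂μ) - ((∫ ω, T2a ω ∂μ) - ((∫ ω, T2bm ω ∂μ) + ∫ ω, T2bp ω ∂μ))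
        - (∫ ω, T3 ω ∂μ) - ((∫ ω, T4a ω ∂μ) - ∫ ω, T4b ω ∂μ) := by
    rw [integral_sub i123 i4, integral_sub i12 iT3, integral_sub iT1 i2,
      integral_sub iT2a i2b, integral_sub iT4a iT4b]
    rw [integral_add iT2bm iT2bp]
  calc ∫ ω, xiT X Z A Y w π Qstar γf κstar fA fZ ω ∂μ
      = ∫ ω, (T1 ω - (T2a ω - (T2bm ω + T2bp ω)) - T3 ω - (T4a ω - T4b ω)) ∂μ :=
        integral_congr_ae (Filter.Eventually.of_forall hxi)
    _ = ∫ ω, T1 ω ∂μ := by rw [hsplit, E2, E3, E4]; ring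
end
end

section
/- For an integrable real random variable W, a random variable Z with Z∈{−1,1}, and any measurable regime π: X→{−1,1}, one has E[W·I{Z ≠ π(X)}] = E[|W|·I{sign(W)·Z ≠ π(X)}] − E[|W|·I{W < 0}], where sign(w)=w/|w| for w≠0 and sign(0)=0; since the subtracted term does not depend on π, a regime minimizes E[W·I{Z ≠ π(X)}] over a class if and only if it minimizes E[|W|·I{sign(W)·Z ≠ π(X)}] over that class. -/
open MeasureTheory ProbabilityTheory

noncomputable section

/-- Pointwise identity. -/
lemma stmt15_pointwise (w z p : ℝ) (hz : z = -1 ∨ z = 1) (hp : p = -1 ∨ p = 1) :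
    w * (if z ≠ p then 1 else 0)
      = |w| * (if Real.sign w * z ≠ p then 1 else 0) - |w| * (if w < 0 then 1 else 0) := by
  rcases lt_trichotomy w 0 with hw | hw | hw
  · rw [Real.sign_of_neg hw, abs_of_neg hw, if_pos hw]
    rcases hz with hz | hz <;> rcases hp with hp | hp <;> subst hz <;> subst hp <;>
      norm_num <;> linarith
  · subst hw
    rcases hp with hp | hp <;> simp [hp] <;> norm_num
  · rw [Real.sign_of_pos hw, abs_of_pos hw, if_neg (not_lt.mpr hw.le)]
    rcases hz with hz | hz <;> rcases hp with hp | hp <;> subst hz <;> subst hp <;>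
      norm_num

/-- Integral identity for a measurable `W`. -/
lemma stmt15_key
    {Ω : Type*} [MeasurableSpace Ω] (μ : Measure Ω)
    {𝓧 : Type*} [MeasurableSpace 𝓧]
    (X : Ω → 𝓧) (Z W : Ω → ℝ)
    (hX : Measurable X) (hZ : Measurable Z) (hWm : Measurable W) (hW : Integrable W μ)
    (hZr : ∀ ω, Z ω = -1 ∨ Z ω = 1)
    (π : 𝓧 → ℝ) (hπm : Measurable π) (hπr : ∀ x, π x = -1 ∨ π x = 1) :
    ∫ ω, W ω * (if Z ω ≠ π (X ω) then 1 else 0) ∂μ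
        = (∫ ω, |W ω| * (if Real.sign (W ω) * Z ω ≠ π (X ω) then 1 else 0) ∂μ)
          - ∫ ω, |W ω| * (if W ω < 0 then 1 else 0) ∂μ := by
  have hind2 : Measurable fun ω => (if Real.sign (W ω) * Z ω ≠ π (X ω) then (1:ℝ) else 0) := by
    apply Measurable.ite _ measurable_const measurable_const
    have hsgn : Measurable Real.sign := by
      unfold Real.sign
      exact Measurable.ite (measurableSet_lt measurable_id measurable_const)
        measurable_const (Measurable.ite (measurableSet_lt measurable_const measurable_id)
          measurable_const measurable_const)
    exact (measurableSet_eq_fun ((hsgn.comp hWm).mul hZ) (hπm.comp hX)).compl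
  have hind3 : Measurable fun ω => (if W ω < 0 then (1:ℝ) else 0) := by
    apply Measurable.ite _ measurable_const measurable_const
    exact measurableSet_lt hWm measurable_const
  have hi2 : Integrable (fun ω => |W ω| * (if Real.sign (W ω) * Z ω ≠ π (X ω) then (1:ℝ) else 0)) μ := by
    refine hW.abs.mono ((hWm.abs.mul hind2).aestronglyMeasurable) (ae_of_all _ fun ω => ?_)
    simp only [norm_mul, Real.norm_eq_abs, abs_abs]
    split_ifs <;> simp
  have hi3 : Integrable (fun ω => |W ω| * (if W ω < 0 then (1:ℝ) else 0)) μ := by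
    refine hW.abs.mono ((hWm.abs.mul hind3).aestronglyMeasurable) (ae_of_all _ fun ω => ?_)
    simp only [norm_mul, Real.norm_eq_abs, abs_abs]
    split_ifs <;> simp
  rw [← integral_sub hi2 hi3]
  exact integral_congr_ae (ae_of_all _ fun ω =>
    stmt15_pointwise (W ω) (Z ω) (π (X ω)) (hZr ω) (hπr (X ω)))

/-- For an integrable real `W`, `Z ∈ {-1,1}` and any measurable regime
`π : 𝓧 → {-1,1}`,
`E[W·1{Z ≠ π(X)}] = E[|W|·1{sign(W)·Z ≠ π(X)}] − E[|W|·1{W < 0}]`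
(with `sign(w) = w/|w|` for `w ≠ 0`, `sign 0 = 0`); since the subtracted term does not
depend on `π`, a regime minimizes `E[W·1{Z ≠ π(X)}]` over a class iff it minimizes
`E[|W|·1{sign(W)·Z ≠ π(X)}]` over that class. -/
theorem statement_15
    {Ω : Type*} [MeasurableSpace Ω] (μ : Measure Ω) [IsProbabilityMeasure μ]
    {𝓧 : Type*} [MeasurableSpace 𝓧]
    (X : Ω → 𝓧) (Z W : Ω → ℝ)
    (hX : Measurable X) (hZ : Measurable Z) (hW : Integrable W μ)
    (hZr : ∀ ω, Z ω = -1 ∨ Z ω = 1)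
    (π : 𝓧 → ℝ) (hπm : Measurable π) (hπr : ∀ x, π x = -1 ∨ π x = 1) :
    (∫ ω, W ω * (if Z ω ≠ π (X ω) then 1 else 0) ∂μ
        = (∫ ω, |W ω| * (if Real.sign (W ω) * Z ω ≠ π (X ω) then 1 else 0) ∂μ)
          - ∫ ω, |W ω| * (if W ω < 0 then 1 else 0) ∂μ)
    ∧ ∀ 𝒟 : Set (𝓧 → ℝ),
        (∀ π' ∈ 𝒟, Measurable π') → (∀ π' ∈ 𝒟, ∀ x, π' x = -1 ∨ π' x = 1) →
        π ∈ 𝒟 →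
        ((∀ π' ∈ 𝒟, ∫ ω, W ω * (if Z ω ≠ π (X ω) then 1 else 0) ∂μ
              ≤ ∫ ω, W ω * (if Z ω ≠ π' (X ω) then 1 else 0) ∂μ)
          ↔ (∀ π' ∈ 𝒟, ∫ ω, |W ω| * (if Real.sign (W ω) * Z ω ≠ π (X ω) then 1 else 0) ∂μ
              ≤ ∫ ω, |W ω| * (if Real.sign (W ω) * Z ω ≠ π' (X ω) then 1 else 0) ∂μ)) := by
  obtain ⟨W', hW'm, hWW'⟩ : ∃ W' : Ω → ℝ, Measurable W' ∧ W =ᵐ[μ] W' :=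
    ⟨hW.1.mk W, hW.1.stronglyMeasurable_mk.measurable, hW.1.ae_eq_mk⟩
  have hW' : Integrable W' μ := hW.congr hWW'
  have hkey : ∀ π' : 𝓧 → ℝ, Measurable π' → (∀ x, π' x = -1 ∨ π' x = 1) →
      ∫ ω, W ω * (if Z ω ≠ π' (X ω) then 1 else 0) ∂μ
        = (∫ ω, |W ω| * (if Real.sign (W ω) * Z ω ≠ π' (X ω) then 1 else 0) ∂μ)
          - ∫ ω, |W ω| * (if W ω < 0 then 1 else 0) ∂μ := by
    intro π' hπ'm hπ'r
    have e1 : ∫ ω, W ω * (if Z ω ≠ π' (X ω) then 1 else 0) ∂μ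
        = ∫ ω, W' ω * (if Z ω ≠ π' (X ω) then 1 else 0) ∂μ :=
      integral_congr_ae (by filter_upwards [hWW'] with ω h; rw [h])
    have e2 : ∫ ω, |W ω| * (if Real.sign (W ω) * Z ω ≠ π' (X ω) then 1 else 0) ∂μ
        = ∫ ω, |W' ω| * (if Real.sign (W' ω) * Z ω ≠ π' (X ω) then 1 else 0) ∂μ :=
      integral_congr_ae (by filter_upwards [hWW'] with ω h; rw [h])
    have e3 : ∫ ω, |W ω| * (if W ω < 0 then 1 else 0) ∂μ
        = ∫ ω, |W' ω| * (if W' ω < 0 then 1 else 0) ∂μ :=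
      integral_congr_ae (by filter_upwards [hWW'] with ω h; rw [h])
    rw [e1, e2, e3]
    exact stmt15_key μ X Z W' hX hZ hW'm hW' hZr π' hπ'm hπ'r
  refine ⟨hkey π hπm hπr, fun 𝒟 hm hr hmem => ?_⟩
  constructor
  · intro h π' hπ'
    have := h π' hπ'
    rw [hkey π hπm hπr, hkey π' (hm π' hπ') (hr π' hπ')] at this
    linarith
  · intro h π' hπ'
    have := h π' hπ'
    rw [hkey π hπm hπr, hkey π' (hm π' hπ') (hr π' hπ')]
    linarith
end
end

section
/- Let Δ be an integrable measurable real function of X and suppose P(Z=z | X) > 0 almost surely for z∈{−1,1}. Then for every measurable regime π: X→{−1,1}, E[Z·Δ(X)·I{π(X)≠Z}] = −E[ Δ(X)·π(X)·P(Z=−π(X) | X) ], and any regime π* with π*(x)=sign(Δ(x)) whenever Δ(x)≠0 minimizes E[Z·Δ(X)·I{π(X)≠Z}] over all measurable regimes π: X→{−1,1}. -/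
open MeasureTheory ProbabilityTheory

noncomputable section

private lemma aux_cond {Ω : Type*} {m m0 : MeasurableSpace Ω} (hm : m ≤ m0)
    (μ : @MeasureTheory.Measure Ω m0) [IsProbabilityMeasure μ]
    (F G : Ω → ℝ) (hF : StronglyMeasurable[m] F)
    (hFG : Integrable (F * G) μ) (hG : Integrable G μ) :
    ∫ ω, F ω * G ω ∂μ = ∫ ω, F ω * (μ[G|m]) ω ∂μ := by
  calc ∫ ω, F ω * G ω ∂μ = ∫ ω, (F * G) ω ∂μ := rfl
    _ = ∫ ω, (μ[F * G|m]) ω ∂μ := (integral_condExp hm).symm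
    _ = ∫ ω, F ω * (μ[G|m]) ω ∂μ := by
        refine integral_congr_ae ?_
        filter_upwards [condExp_mul_of_stronglyMeasurable_left hF hFG hG] with ω h
        exact h

/-- If `Δ` is an integrable measurable function of `X` and
`P(Z=z | X) > 0` a.s. for `z ∈ {-1,1}`, then for every measurable regime `π : 𝓧 → {-1,1}`,
`E[Z·Δ(X)·1{π(X)≠Z}] = −E[Δ(X)·π(X)·P(Z=−π(X)|X)]`, and any regime `π*` with
`π*(x) = sign(Δ(x))` whenever `Δ(x) ≠ 0` minimizes `E[Z·Δ(X)·1{π(X)≠Z}]` over all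
measurable regimes. -/
theorem statement_16
    {Ω : Type*} [MeasurableSpace Ω] (μ : Measure Ω) [IsProbabilityMeasure μ]
    {𝓧 : Type*} [MeasurableSpace 𝓧]
    (X : Ω → 𝓧) (Z : Ω → ℝ)
    (hX : Measurable X) (hZ : Measurable Z)
    (hZr : ∀ ω, Z ω = -1 ∨ Z ω = 1)
    (Δ : 𝓧 → ℝ) (hΔm : Measurable Δ)
    (hΔint : Integrable (fun ω => Δ (X ω)) μ)
    -- p(z, ·) ∘ X is a version of P(Z = z | X), positive a.s.
    (p : ℝ → 𝓧 → ℝ)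
    (hp : ∀ z : ℝ, z = -1 ∨ z = 1 →
      (fun ω => p z (X ω)) =ᵐ[μ]
        μ[Set.indicator {ω | Z ω = z} (fun _ => (1 : ℝ)) |
          MeasurableSpace.comap X inferInstance])
    (hppos : ∀ z : ℝ, z = -1 ∨ z = 1 → ∀ᵐ ω ∂μ, 0 < p z (X ω)) :
    (∀ π : 𝓧 → ℝ, Measurable π → (∀ x, π x = -1 ∨ π x = 1) →
      ∫ ω, Z ω * Δ (X ω) * (if π (X ω) ≠ Z ω then 1 else 0) ∂μ
        = - ∫ ω, Δ (X ω) * π (X ω) * p (-(π (X ω))) (X ω) ∂μ)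
    ∧ (∀ πstar : 𝓧 → ℝ, Measurable πstar → (∀ x, πstar x = -1 ∨ πstar x = 1) →
        (∀ x, Δ x ≠ 0 → πstar x = Real.sign (Δ x)) →
        ∀ π : 𝓧 → ℝ, Measurable π → (∀ x, π x = -1 ∨ π x = 1) →
          ∫ ω, Z ω * Δ (X ω) * (if πstar (X ω) ≠ Z ω then 1 else 0) ∂μ
            ≤ ∫ ω, Z ω * Δ (X ω) * (if π (X ω) ≠ Z ω then 1 else 0) ∂μ) := by
  have hm := hX.comap_le
  have hXm : Measurable[MeasurableSpace.comap X inferInstance] X :=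
    Measurable.of_comap_le le_rfl
  set I : ℝ → Ω → ℝ := fun z => Set.indicator {ω | Z ω = z} (fun _ => (1 : ℝ)) with hI_def
  have hIset : ∀ z : ℝ, MeasurableSet {ω | Z ω = z} := fun z =>
    hZ (measurableSet_singleton z)
  have hIint : ∀ z : ℝ, Integrable (I z) μ := fun z =>
    (integrable_const (1 : ℝ)).indicator (hIset z)
  have hIval : ∀ z ω, I z ω = if Z ω = z then 1 else 0 := fun z ω => by
    simp [hI_def, Set.indicator_apply]
  -- bound on p
  have hple : ∀ z : ℝ, z = -1 ∨ z = 1 → ∀ᵐ ω ∂μ, p z (X ω) ≤ 1 := by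
    intro z hz
    have h1 : μ[I z | MeasurableSpace.comap X inferInstance]
        ≤ᵐ[μ] μ[(fun _ => (1:ℝ)) | MeasurableSpace.comap X inferInstance] := by
      refine condExp_mono (hIint z) (integrable_const 1) ?_
      refine Filter.Eventually.of_forall fun ω => ?_
      rw [hIval]; dsimp only; split <;> norm_num
    filter_upwards [hp z hz, h1] with ω h h1
    rw [h]
    calc _ ≤ (μ[(fun _ => (1:ℝ)) | MeasurableSpace.comap X inferInstance]) ω := h1
      _ = 1 := by rw [condExp_const hm (1:ℝ)]
  -- key conditioning lemma
  have key : ∀ z : ℝ, z = -1 ∨ z = 1 → ∀ f : 𝓧 → ℝ, Measurable f →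
      Integrable (fun ω => f (X ω)) μ →
      ∫ ω, f (X ω) * (if Z ω = z then 1 else 0) ∂μ
        = ∫ ω, f (X ω) * p z (X ω) ∂μ := by
    intro z hz f hf hfint
    have hfXm : StronglyMeasurable[MeasurableSpace.comap X inferInstance]
        (fun ω => f (X ω)) := (hf.comp hXm).stronglyMeasurable
    have hfg : Integrable ((fun ω => f (X ω)) * I z) μ := by
      refine Integrable.mono' hfint.abs ?_ ?_
      · exact hfint.aestronglyMeasurable.mul (hIint z).aestronglyMeasurable
      · refine Filter.Eventually.of_forall fun ω => ?_
        simp only [Pi.mul_apply, norm_mul, Real.norm_eq_abs]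
        rw [hIval]
        have : |if Z ω = z then (1:ℝ) else 0| ≤ 1 := by split <;> norm_num
        calc |f (X ω)| * |if Z ω = z then (1:ℝ) else 0| ≤ |f (X ω)| * 1 :=
              mul_le_mul_of_nonneg_left this (abs_nonneg _)
          _ = |f (X ω)| := mul_one _
    calc ∫ ω, f (X ω) * (if Z ω = z then 1 else 0) ∂μ
        = ∫ ω, f (X ω) * I z ω ∂μ := by
          refine integral_congr_ae (Filter.Eventually.of_forall fun ω => ?_)
          show f (X ω) * (if Z ω = z then 1 else 0) = f (X ω) * I z ω
          rw [hIval]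
      _ = ∫ ω, f (X ω) * (μ[I z | MeasurableSpace.comap X inferInstance]) ω ∂μ :=
          aux_cond hm μ _ _ hfXm hfg (hIint z)
      _ = ∫ ω, f (X ω) * p z (X ω) ∂μ := by
          refine integral_congr_ae ?_
          filter_upwards [hp z hz] with ω h
          rw [h]
  -- a.e. strong measurability of p z ∘ X
  have hpmeas : ∀ z : ℝ, z = -1 ∨ z = 1 →
      AEStronglyMeasurable (fun ω => p z (X ω)) μ := fun z hz =>
    ((stronglyMeasurable_condExp.mono hm).aestronglyMeasurable).congr (hp z hz).symm
  have hprod_int : ∀ z : ℝ, z = -1 ∨ z = 1 → ∀ f : 𝓧 → ℝ,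
      Integrable (fun ω => f (X ω)) μ →
      Integrable (fun ω => f (X ω) * p z (X ω)) μ := by
    intro z hz f hfint
    refine Integrable.mono' hfint.abs (hfint.aestronglyMeasurable.mul (hpmeas z hz)) ?_
    filter_upwards [hple z hz, hppos z hz] with ω h1 h0
    simp only [norm_mul, Real.norm_eq_abs]
    calc |f (X ω)| * |p z (X ω)| ≤ |f (X ω)| * 1 := by
          refine mul_le_mul_of_nonneg_left ?_ (abs_nonneg _)
          rw [abs_of_pos h0]; exact h1
      _ = |f (X ω)| := mul_one _
  -- Part 1
  have part1 : ∀ π : 𝓧 → ℝ, Measurable π → (∀ x, π x = -1 ∨ π x = 1) →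
      ∫ ω, Z ω * Δ (X ω) * (if π (X ω) ≠ Z ω then 1 else 0) ∂μ
        = - ∫ ω, Δ (X ω) * π (X ω) * p (-(π (X ω))) (X ω) ∂μ := by
    intro π hπ hπr
    set fA : 𝓧 → ℝ := fun x => Δ x * (if π x = 1 then 1 else 0) with hfA_def
    set fC : 𝓧 → ℝ := fun x => Δ x * (if π x = -1 then 1 else 0) with hfC_def
    have hfAm : Measurable fA :=
      hΔm.mul (Measurable.ite (hπ (measurableSet_singleton 1)) measurable_const measurable_const)
    have hfCm : Measurable fC :=
      hΔm.mul (Measurable.ite (hπ (measurableSet_singleton (-1))) measurable_const measurable_const)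
    have hfAint : Integrable (fun ω => fA (X ω)) μ := by
      refine Integrable.mono' hΔint.abs ((hfAm.comp hX).aestronglyMeasurable) ?_
      refine Filter.Eventually.of_forall fun ω => ?_
      simp only [hfA_def, norm_mul, Real.norm_eq_abs]
      split <;> simp [abs_nonneg]
    have hfCint : Integrable (fun ω => fC (X ω)) μ := by
      refine Integrable.mono' hΔint.abs ((hfCm.comp hX).aestronglyMeasurable) ?_
      refine Filter.Eventually.of_forall fun ω => ?_
      simp only [hfC_def, norm_mul, Real.norm_eq_abs]
      split <;> simp [abs_nonneg]
    have P1 : ∀ ω, Z ω * Δ (X ω) * (if π (X ω) ≠ Z ω then 1 else 0)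
        = fC (X ω) * (if Z ω = 1 then 1 else 0)
          - fA (X ω) * (if Z ω = -1 then 1 else 0) := by
      intro ω
      rcases hπr (X ω) with h1 | h1 <;> rcases hZr ω with h2 | h2 <;>
        simp [hfA_def, hfC_def, h1, h2] <;> norm_num <;> ring
    have P2 : ∀ ω, Δ (X ω) * π (X ω) * p (-(π (X ω))) (X ω)
        = fA (X ω) * p (-1) (X ω) - fC (X ω) * p 1 (X ω) := by
      intro ω
      rcases hπr (X ω) with h1 | h1 <;> simp [hfA_def, hfC_def, h1] <;> norm_num <;> ring
    have hintA1 : Integrable (fun ω => fA (X ω) * (if Z ω = -1 then 1 else 0)) μ := by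
      refine Integrable.mono' hfAint.abs (hfAint.aestronglyMeasurable.mul ?_) ?_
      · exact (Measurable.ite (hIset (-1)) measurable_const measurable_const).aestronglyMeasurable
      · refine Filter.Eventually.of_forall fun ω => ?_
        simp only [norm_mul, Real.norm_eq_abs]
        have : |if Z ω = (-1:ℝ) then (1:ℝ) else 0| ≤ 1 := by split <;> norm_num
        calc |fA (X ω)| * |if Z ω = (-1:ℝ) then (1:ℝ) else 0| ≤ |fA (X ω)| * 1 :=
              mul_le_mul_of_nonneg_left this (abs_nonneg _)
          _ = |fA (X ω)| := mul_one _
    have hintC1 : Integrable (fun ω => fC (X ω) * (if Z ω = 1 then 1 else 0)) μ := by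
      refine Integrable.mono' hfCint.abs (hfCint.aestronglyMeasurable.mul ?_) ?_
      · exact (Measurable.ite (hIset 1) measurable_const measurable_const).aestronglyMeasurable
      · refine Filter.Eventually.of_forall fun ω => ?_
        simp only [norm_mul, Real.norm_eq_abs]
        have : |if Z ω = (1:ℝ) then (1:ℝ) else 0| ≤ 1 := by split <;> norm_num
        calc |fC (X ω)| * |if Z ω = (1:ℝ) then (1:ℝ) else 0| ≤ |fC (X ω)| * 1 :=
              mul_le_mul_of_nonneg_left this (abs_nonneg _)
          _ = |fC (X ω)| := mul_one _
    have hintAp : Integrable (fun ω => fA (X ω) * p (-1) (X ω)) μ :=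
      hprod_int (-1) (Or.inl rfl) fA hfAint
    have hintCp : Integrable (fun ω => fC (X ω) * p 1 (X ω)) μ :=
      hprod_int 1 (Or.inr rfl) fC hfCint
    calc ∫ ω, Z ω * Δ (X ω) * (if π (X ω) ≠ Z ω then 1 else 0) ∂μ
        = ∫ ω, (fC (X ω) * (if Z ω = 1 then 1 else 0)
            - fA (X ω) * (if Z ω = -1 then 1 else 0)) ∂μ :=
          integral_congr_ae (Filter.Eventually.of_forall fun ω => P1 ω)
      _ = (∫ ω, fC (X ω) * (if Z ω = 1 then 1 else 0) ∂μ)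
            - ∫ ω, fA (X ω) * (if Z ω = -1 then 1 else 0) ∂μ := by
          rw [integral_sub hintC1 hintA1]
      _ = (∫ ω, fC (X ω) * p 1 (X ω) ∂μ) - ∫ ω, fA (X ω) * p (-1) (X ω) ∂μ := by
          rw [key (-1) (Or.inl rfl) fA hfAm hfAint, key 1 (Or.inr rfl) fC hfCm hfCint]
      _ = - ∫ ω, (fA (X ω) * p (-1) (X ω) - fC (X ω) * p 1 (X ω)) ∂μ := by
          rw [integral_sub hintAp hintCp]; ring
      _ = - ∫ ω, Δ (X ω) * π (X ω) * p (-(π (X ω))) (X ω) ∂μ := by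
          rw [integral_congr_ae (Filter.Eventually.of_forall fun ω => (P2 ω).symm)]
  refine ⟨part1, ?_⟩
  intro πs hπs hπsr hsign π hπ hπr
  rw [part1 πs hπs hπsr, part1 π hπ hπr, neg_le_neg_iff]
  have obji : ∀ π : 𝓧 → ℝ, Measurable π → (∀ x, π x = -1 ∨ π x = 1) →
      Integrable (fun ω => Δ (X ω) * π (X ω) * p (-(π (X ω))) (X ω)) μ := by
    intro π hπ hπr
    set fA : 𝓧 → ℝ := fun x => Δ x * (if π x = 1 then 1 else 0) with hfA_def
    set fC : 𝓧 → ℝ := fun x => Δ x * (if π x = -1 then 1 else 0) with hfC_def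
    have hfAm : Measurable fA :=
      hΔm.mul (Measurable.ite (hπ (measurableSet_singleton 1)) measurable_const measurable_const)
    have hfCm : Measurable fC :=
      hΔm.mul (Measurable.ite (hπ (measurableSet_singleton (-1))) measurable_const measurable_const)
    have hfAint : Integrable (fun ω => fA (X ω)) μ := by
      refine Integrable.mono' hΔint.abs ((hfAm.comp hX).aestronglyMeasurable) ?_
      refine Filter.Eventually.of_forall fun ω => ?_
      simp only [hfA_def, norm_mul, Real.norm_eq_abs]
      split <;> simp [abs_nonneg]
    have hfCint : Integrable (fun ω => fC (X ω)) μ := by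
      refine Integrable.mono' hΔint.abs ((hfCm.comp hX).aestronglyMeasurable) ?_
      refine Filter.Eventually.of_forall fun ω => ?_
      simp only [hfC_def, norm_mul, Real.norm_eq_abs]
      split <;> simp [abs_nonneg]
    have P2 : ∀ ω, Δ (X ω) * π (X ω) * p (-(π (X ω))) (X ω)
        = fA (X ω) * p (-1) (X ω) - fC (X ω) * p 1 (X ω) := by
      intro ω
      rcases hπr (X ω) with h1 | h1 <;> simp [hfA_def, hfC_def, h1] <;> norm_num <;> ring
    have := (hprod_int (-1) (Or.inl rfl) fA hfAint).sub (hprod_int 1 (Or.inr rfl) fC hfCint)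
    exact this.congr (Filter.Eventually.of_forall fun ω => (P2 ω).symm)
  refine integral_mono_ae (obji π hπ hπr) (obji πs hπs hπsr) ?_
  filter_upwards [hppos (-1) (Or.inl rfl), hppos 1 (Or.inr rfl)] with ω hpm1 hp1
  show Δ (X ω) * π (X ω) * p (-(π (X ω))) (X ω)
      ≤ Δ (X ω) * πs (X ω) * p (-(πs (X ω))) (X ω)
  by_cases hΔ0 : Δ (X ω) = 0
  · simp [hΔ0]
  rcases (Ne.lt_or_gt hΔ0) with hneg | hpos
  · have hs : πs (X ω) = -1 := by
      rw [hsign _ hΔ0, Real.sign_of_neg hneg]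
    rcases hπr (X ω) with h1 | h1 <;> rw [h1, hs] <;> norm_num <;> nlinarith
  · have hs : πs (X ω) = 1 := by
      rw [hsign _ hΔ0, Real.sign_of_pos hpos]
    rcases hπr (X ω) with h1 | h1 <;> rw [h1, hs] <;> norm_num <;> nlinarith
end
end
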